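/- arXiv:2512.09559 — 8 statements merged into one kernel-verified Lean document; each statement's English description precedes it below -/
import Mathlib

section
/- The numerical range of a complex square matrix A, defined as W(A) = { x*Ax : x ∈ ℂⁿ, ‖x‖ = 1 }, is a convex subset of ℂ. -/
open Matrix

/-- The numerical range of a complex square matrix. -/
def numRange {n : ℕ} (A : Matrix (Fin n) (Fin n) ℂ) : Set ℂ :=
  {z | ∃ x : Fin n → ℂ, star x ⬝ᵥ x = 1 ∧ z = star x ⬝ᵥ (A *ᵥ x)}

open ComplexOrder Set

/-! An affine change `A ↦ (q - p)⁻¹ • (A - p • 1)` moves two points `p ≠ q` of the numerical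
range to `0` and `1`, so it suffices to show `[0, 1] ⊆ W(B)` when `u*Bu = 0` and `v*Bv = 1` for unit
vectors `u`, `v`. Rotating `v` by a unimodular scalar makes the cross term `u*Bv + v*Bu` real. Along
the real segment `x t = (1 - t) u + t v` the Rayleigh quotient `x*Bx / x*x` is then real and
continuous (`x t ≠ 0` because `u*Bu = 0 ≠ v*Bv`), and it runs from `0` to `1`, so it takes every
value in between. -/

section QuadraticForm

variable {ι : Type*} [Fintype ι] (B : Matrix ι ι ℂ)

theorem star_smul_dotProduct_mulVec_smul (c : ℂ) (x : ι → ℂ) :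
    star (c • x) ⬝ᵥ (B *ᵥ (c • x)) = star c * c * (star x ⬝ᵥ (B *ᵥ x)) := by
  simp only [mulVec_smul, star_smul, smul_dotProduct, dotProduct_smul, smul_eq_mul]
  ring

theorem star_smul_dotProduct_mulVec_smul_real (r : ℝ) (x : ι → ℂ) :
    star (r • x) ⬝ᵥ (B *ᵥ (r • x)) = r ^ 2 • (star x ⬝ᵥ (B *ᵥ x)) := by
  simp only [mulVec_smul, star_smul, smul_dotProduct, dotProduct_smul, star_trivial, smul_smul,
    sq]

theorem star_smul_add_smul_dotProduct_mulVec (a b : ℝ) (u v : ι → ℂ) :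
    star (a • u + b • v) ⬝ᵥ (B *ᵥ (a • u + b • v)) =
      a ^ 2 • (star u ⬝ᵥ (B *ᵥ u)) + (a * b) • (star u ⬝ᵥ (B *ᵥ v) + star v ⬝ᵥ (B *ᵥ u)) +
        b ^ 2 • (star v ⬝ᵥ (B *ᵥ v)) := by
  simp only [mulVec_add, mulVec_smul, star_add, star_smul, star_trivial, add_dotProduct,
    dotProduct_add, smul_dotProduct, dotProduct_smul, smul_smul, smul_add]
  module

theorem eq_zero_of_smul_add_smul_eq_zero {u v : ι → ℂ} (hu : u ≠ 0)
    (hBu : star u ⬝ᵥ (B *ᵥ u) = 0) (hBv : star v ⬝ᵥ (B *ᵥ v) ≠ 0) {a b : ℝ}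
    (h : a • u + b • v = 0) : a = 0 ∧ b = 0 := by
  have hbv : b • v = (-a) • u := by rw [neg_smul]; exact eq_neg_of_add_eq_zero_right h
  have hb : b = 0 := by
    have := congrArg (fun x => star x ⬝ᵥ (B *ᵥ x)) hbv
    simp only [star_smul_dotProduct_mulVec_smul_real, hBu, smul_zero, smul_eq_zero, hBv,
      or_false] at this
    exact pow_eq_zero_iff two_ne_zero |>.mp this
  subst hb
  simpa [hu] using h

theorem im_star_dotProduct_self (x : ι → ℂ) : (star x ⬝ᵥ x).im = 0 :=
  (Complex.nonneg_iff.mp (dotProduct_star_self_nonneg x)).2.symm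

end QuadraticForm

theorem Complex.exists_star_mul_self_eq_one_im_eq_zero (α β : ℂ) :
    ∃ c : ℂ, star c * c = 1 ∧ (c * α + star c * β).im = 0 := by
  set γ := α - star β
  set c := exp (↑(-γ.arg) * I)
  have hc : ‖c‖ = 1 := norm_exp_ofReal_mul_I _
  have hcγ : c * γ = ‖γ‖ := by
    conv_lhs => rw [← norm_mul_exp_arg_mul_I γ]
    rw [mul_left_comm, ← exp_add]
    simp
  refine ⟨c, by rw [RCLike.star_def, conj_mul', hc]; simp, ?_⟩
  have : (c * α + star c * β).im = (c * γ).im := by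
    simp only [γ, RCLike.star_def, add_im, mul_im, sub_im, sub_re, conj_re, conj_im]
    ring
  rw [this, hcγ, ofReal_im]

section NumRange

variable {n : ℕ}

theorem div_mem_numRange (B : Matrix (Fin n) (Fin n) ℂ) {x : Fin n → ℂ} (hx : x ≠ 0) :
    star x ⬝ᵥ (B *ᵥ x) / (star x ⬝ᵥ x) ∈ numRange B := by
  set N := star x ⬝ᵥ x
  have hN : 0 < N := dotProduct_star_self_pos_iff.mpr hx
  have hNre : (N.re : ℂ) = N := Complex.ext rfl (im_star_dotProduct_self x).symm
  have hr : (√N.re)⁻¹ ^ 2 = N.re⁻¹ := by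
    rw [inv_pow, Real.sq_sqrt (Complex.pos_iff.mp hN).1.le]
  refine ⟨(√N.re)⁻¹ • x, ?_, ?_⟩
  · have := star_smul_dotProduct_mulVec_smul_real 1 (√N.re)⁻¹ x
    simp only [one_mulVec] at this
    rw [this, hr, Complex.real_smul, Complex.ofReal_inv, hNre, inv_mul_cancel₀ hN.ne']
  · rw [star_smul_dotProduct_mulVec_smul_real, hr, Complex.real_smul, Complex.ofReal_inv, hNre,
      div_eq_inv_mul]

theorem smul_sub_smul_one_dotProduct_mulVec (A : Matrix (Fin n) (Fin n) ℂ) (d p : ℂ)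
    {x : Fin n → ℂ} (hx : star x ⬝ᵥ x = 1) :
    star x ⬝ᵥ ((d • (A - p • 1)) *ᵥ x) = d * (star x ⬝ᵥ (A *ᵥ x) - p) := by
  simp only [smul_mulVec, sub_mulVec, one_mulVec, dotProduct_smul, dotProduct_sub, hx,
    smul_eq_mul, mul_one]

theorem numRange_smul_sub_smul_one (A : Matrix (Fin n) (Fin n) ℂ) (d p : ℂ) :
    numRange (d • (A - p • 1)) = (fun z => d * (z - p)) '' numRange A := by
  ext z
  constructor
  · rintro ⟨x, hx, rfl⟩
    exact ⟨_, ⟨x, hx, rfl⟩, (smul_sub_smul_one_dotProduct_mulVec A d p hx).symm⟩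
  · rintro ⟨_, ⟨x, hx, rfl⟩, rfl⟩
    exact ⟨x, hx, (smul_sub_smul_one_dotProduct_mulVec A d p hx).symm⟩

variable {B : Matrix (Fin n) (Fin n) ℂ}

theorem ofReal_mem_numRange_of_im_eq_zero {u v : Fin n → ℂ} (hu : star u ⬝ᵥ u = 1)
    (hv : star v ⬝ᵥ v = 1) (hBu : star u ⬝ᵥ (B *ᵥ u) = 0) (hBv : star v ⬝ᵥ (B *ᵥ v) = 1)
    (hcross : (star u ⬝ᵥ (B *ᵥ v) + star v ⬝ᵥ (B *ᵥ u)).im = 0) {s : ℝ} (hs : s ∈ Icc 0 1) :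
    (s : ℂ) ∈ numRange B := by
  set x : ℝ → Fin n → ℂ := fun t => (1 - t) • u + t • v
  obtain ⟨t, -, ht⟩ :
      ∃ t ∈ Icc (0 : ℝ) 1, (star (x t) ⬝ᵥ (B *ᵥ x t)).re - s * (star (x t) ⬝ᵥ x t).re = 0 := by
    have hcont : Continuous fun t =>
        (star (x t) ⬝ᵥ (B *ᵥ x t)).re - s * (star (x t) ⬝ᵥ x t).re := by
      fun_prop
    apply intermediate_value_Icc zero_le_one hcont.continuousOn
    simp only [x, sub_zero, one_smul, zero_smul, add_zero, zero_add, sub_self, hu, hv, hBu, hBv,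
      Complex.zero_re, Complex.one_re, mul_one, zero_sub, mem_Icc, Left.neg_nonpos_iff, sub_nonneg]
    exact hs
  have hu0 : u ≠ 0 := by rintro rfl; simp at hu
  have hx : x t ≠ 0 := fun h => by
    have := eq_zero_of_smul_add_smul_eq_zero B hu0 hBu (by simp [hBv]) h
    linarith [this.1, this.2]
  have him : (star (x t) ⬝ᵥ (B *ᵥ x t)).im = 0 := by
    rw [star_smul_add_smul_dotProduct_mulVec, hBu, hBv]
    simp only [Complex.add_im, Complex.smul_im, Complex.zero_im, Complex.one_im, hcross,
      smul_zero, add_zero]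
  have hxs : star (x t) ⬝ᵥ (B *ᵥ x t) = s * (star (x t) ⬝ᵥ x t) := by
    apply Complex.ext
    · simp only [Complex.mul_re, Complex.ofReal_re, Complex.ofReal_im, zero_mul, sub_zero]
      linarith
    · simp [him, im_star_dotProduct_self]
  have hN : star (x t) ⬝ᵥ x t ≠ 0 := by simpa using hx
  simpa [hxs, hN] using div_mem_numRange B hx

theorem ofReal_mem_numRange (h0 : 0 ∈ numRange B) (h1 : 1 ∈ numRange B) {s : ℝ}
    (hs : s ∈ Icc 0 1) : (s : ℂ) ∈ numRange B := by
  obtain ⟨u, hu, hBu⟩ := h0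
  obtain ⟨v, hv, hBv⟩ := h1
  obtain ⟨c, hc, hcross⟩ := Complex.exists_star_mul_self_eq_one_im_eq_zero
    (star u ⬝ᵥ (B *ᵥ v)) (star v ⬝ᵥ (B *ᵥ u))
  refine ofReal_mem_numRange_of_im_eq_zero (v := c • v) hu ?_ hBu.symm ?_ ?_ hs
  · have := star_smul_dotProduct_mulVec_smul 1 c v
    rwa [one_mulVec, one_mulVec, hc, hv, one_mul] at this
  · rw [star_smul_dotProduct_mulVec_smul, hc, ← hBv, one_mul]
  · simpa [mulVec_smul, star_smul, smul_dotProduct, dotProduct_smul, mul_comm] using hcross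

end NumRange

/-- Toeplitz–Hausdorff: the numerical range of a complex square matrix is convex. -/
theorem numRange_convex (n : ℕ) (A : Matrix (Fin n) (Fin n) ℂ) :
    Convex ℝ (numRange A) := by
  intro p hp q hq a b _ hb hab
  rcases eq_or_ne p q with rfl | hpq
  · rwa [← add_smul, hab, one_smul]
  have hqp : q - p ≠ 0 := sub_ne_zero.2 hpq.symm
  have hB := numRange_smul_sub_smul_one A (q - p)⁻¹ p
  have h0 : 0 ∈ numRange ((q - p)⁻¹ • (A - p • 1)) := hB ▸ ⟨p, hp, by simp⟩
  have h1 : 1 ∈ numRange ((q - p)⁻¹ • (A - p • 1)) := hB ▸ ⟨q, hq, inv_mul_cancel₀ hqp⟩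
  obtain ⟨z, hz, hzb⟩ := hB ▸ ofReal_mem_numRange h0 h1 ⟨hb, by linarith⟩
  convert hz using 1
  field_simp at hzb
  obtain rfl : a = 1 - b := by linarith
  rw [Complex.real_smul, Complex.real_smul]
  push_cast
  linear_combination -hzb
end

section
/- Suppose a sectorial matrix A ∈ ℂ^{n×n} admits two sectorial decompositions A = Q₁* D₁ Q₁ = Q₂* D₂ Q₂ with Q₁, Q₂ invertible and D₁, D₂ diagonal unitary. Then D₁ and D₂ have the same diagonal entries up to permutation (with multiplicity). -/
/-!
If `A = Qᴴ D Q` with `D` diagonal unitary, then `(Aᴴ)⁻¹ A = Q⁻¹ D² Q`, so the squares of the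
diagonal entries are the eigenvalues of a matrix determined by `A` alone, and the two
decompositions have the same squared entries up to a permutation `σ`.

The quadratic form of `A` is `y ↦ ∑ᵢ |(Q y)ᵢ|² dᵢ`, so `0 ∉ W(A)` says that `0` is not in the convex
hull of the entries of `d₁`, and a separating real functional `f` is positive on all of them. Each
entry of `d₂` is a nonzero nonnegative combination of entries of `d₁`, so `f` is positive on it
as well, which rules out the sign `d₂ i = -d₁ (σ i)`.
-/

open Matrix

theorem exists_perm_eq_comp_of_map_univ_eq {ι α : Type*} [Fintype ι] [DecidableEq α]
    {f g : ι → α} (h : Finset.univ.val.map f = Finset.univ.val.map g) :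
    ∃ σ : Equiv.Perm ι, f = g ∘ σ := by
  have hfiber : ∀ c, Fintype.card {i // f i = c} = Fintype.card {i // g i = c} := fun c => by
    simpa only [Fintype.card_subtype, Finset.card_def, Finset.filter_val, Multiset.count_map,
      eq_comm] using congrArg (Multiset.count c) h
  exact ⟨Equiv.ofFiberEquiv fun c => Fintype.equivOfCardEq (hfiber c),
    funext fun i => (Equiv.ofFiberEquiv_map _ i).symm⟩

theorem linearCombination_image_stdSimplex {ι E : Type*} [Fintype ι] [AddCommGroup E]
    [Module ℝ E] (d : ι → E) :
    Fintype.linearCombination ℝ d '' stdSimplex ℝ ι = convexHull ℝ (Set.range d) := by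
  classical
  rw [← convexHull_rangle_single_eq_stdSimplex, LinearMap.image_convexHull, ← Set.range_comp]
  congr 2
  funext i
  simp

theorem exists_forall_pos_of_zero_notMem_convexHull {ι E : Type*} [Finite ι]
    [NormedAddCommGroup E] [NormedSpace ℝ E] {d : ι → E}
    (h : (0 : E) ∉ convexHull ℝ (Set.range d)) :
    ∃ f : E →L[ℝ] ℝ, ∀ i, 0 < f (d i) := by
  obtain ⟨f, u, hf0, hf⟩ := geometric_hahn_banach_point_closed (convex_convexHull ℝ _)
    ((Set.finite_range d).isClosed_convexHull ℝ) h
  rw [map_zero] at hf0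
  exact ⟨f, fun i => hf0.trans (hf _ (subset_convexHull ℝ _ (Set.mem_range_self i)))⟩

theorem apply_sum_smul_pos {ι E : Type*} [Fintype ι] [AddCommGroup E] [Module ℝ E]
    (f : E →ₗ[ℝ] ℝ) {d : ι → E} (hd : ∀ i, 0 < f (d i)) {w : ι → ℝ} (hw : 0 ≤ w)
    (hw0 : w ≠ 0) : 0 < f (∑ i, w i • d i) := by
  obtain ⟨i, hi⟩ := Function.ne_iff.mp hw0
  simp only [map_sum, map_smul, smul_eq_mul]
  exact Finset.sum_pos' (fun j _ => mul_nonneg (hw j) (hd j).le)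
    ⟨i, Finset.mem_univ i, mul_pos ((hw i).lt_of_ne' hi) (hd i)⟩

theorem eq_of_sq_eq_of_apply_pos {R : Type*} [CommRing R] [NoZeroDivisors R] [Module ℝ R]
    (f : R →ₗ[ℝ] ℝ) {z w : R} (hz : 0 < f z) (hw : 0 < f w) (h : z ^ 2 = w ^ 2) : z = w := by
  refine (sq_eq_sq_iff_eq_or_eq_neg.mp h).resolve_right fun hzw => ?_
  rw [hzw, map_neg] at hz
  linarith

section Congruence

variable {ι : Type*} [Fintype ι] [DecidableEq ι]

theorem star_dotProduct_conjTranspose_diagonal_mulVec (Q : Matrix ι ι ℂ) (d y : ι → ℂ) :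
    star y ⬝ᵥ ((Qᴴ * diagonal d * Q) *ᵥ y) = ∑ i, Complex.normSq ((Q *ᵥ y) i) • d i := by
  rw [← mulVec_mulVec, ← mulVec_mulVec, dotProduct_mulVec, ← star_mulVec]
  simp only [dotProduct, mulVec_diagonal, Pi.star_apply, RCLike.star_def, Complex.real_smul,
    Complex.normSq_eq_conj_mul_self]
  exact Finset.sum_congr rfl fun i _ => by ring

theorem charpoly_nonsing_inv_mul_mul {R : Type*} [CommRing R] {Q : Matrix ι ι R} (hQ : IsUnit Q)
    (M : Matrix ι ι R) :
    (Q⁻¹ * M * Q).charpoly = M.charpoly := by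
  rw [charpoly_mul_comm, ← Matrix.mul_assoc, mul_nonsing_inv _ ((isUnit_iff_isUnit_det Q).mp hQ),
    Matrix.one_mul]

theorem roots_charpoly_diagonal {R : Type*} [CommRing R] [IsDomain R] (d : ι → R) :
    (diagonal d).charpoly.roots = Finset.univ.val.map d := by
  rw [charpoly_diagonal, Polynomial.roots_prod _ _ (by
    simp [Finset.prod_ne_zero_iff, Polynomial.X_sub_C_ne_zero])]
  simp

theorem conjTranspose_mul_diagonal_sq_eq {Q : Matrix ι ι ℂ} (hQ : IsUnit Q) {d : ι → ℂ}
    (hd : ∀ i, ‖d i‖ = 1) :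
    (Qᴴ * diagonal d * Q)ᴴ * (Q⁻¹ * diagonal (d ^ 2) * Q) = Qᴴ * diagonal d * Q := by
  have hD : (diagonal d)ᴴ * diagonal (d ^ 2) = diagonal d := by
    rw [diagonal_conjTranspose, diagonal_mul_diagonal]
    congr 1
    funext i
    have := Complex.conj_mul' (d i)
    simp only [Pi.star_apply, RCLike.star_def, Pi.pow_apply, hd i, Complex.ofReal_one, one_pow]
      at this ⊢
    linear_combination d i * this
  calc (Qᴴ * diagonal d * Q)ᴴ * (Q⁻¹ * diagonal (d ^ 2) * Q)
      = Qᴴ * (diagonal d)ᴴ * (Q * Q⁻¹) * diagonal (d ^ 2) * Q := by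
        simp only [conjTranspose_mul, conjTranspose_conjTranspose, Matrix.mul_assoc]
    _ = Qᴴ * diagonal d * Q := by
        rw [mul_nonsing_inv _ ((isUnit_iff_isUnit_det Q).mp hQ)]
        simp only [Matrix.mul_one, Matrix.mul_assoc, hD]

theorem exists_nonneg_ne_zero_eq_sum_smul_of_conjTranspose_mul_diagonal_mul_eq
    {Q₁ Q₂ : Matrix ι ι ℂ} (hQ₁ : IsUnit Q₁) (hQ₂ : IsUnit Q₂) {d₁ d₂ : ι → ℂ}
    (h : Q₁ᴴ * diagonal d₁ * Q₁ = Q₂ᴴ * diagonal d₂ * Q₂) (j : ι) :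
    ∃ w : ι → ℝ, 0 ≤ w ∧ w ≠ 0 ∧ d₂ j = ∑ i, w i • d₁ i := by
  obtain ⟨y, hy⟩ := mulVec_surjective_iff_isUnit.mpr hQ₂ (Pi.single j 1)
  refine ⟨fun i => Complex.normSq ((Q₁ *ᵥ y) i), fun i => Complex.normSq_nonneg _, ?_, ?_⟩
  · intro h0
    have hQ₁y : Q₁ *ᵥ y = 0 := funext fun i => Complex.normSq_eq_zero.mp (congrFun h0 i)
    rw [← mulVec_zero Q₁, (mulVec_injective_iff_isUnit.mpr hQ₁).eq_iff] at hQ₁y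
    rw [hQ₁y, mulVec_zero] at hy
    simpa using congrFun hy j
  · rw [← star_dotProduct_conjTranspose_diagonal_mulVec, h,
      star_dotProduct_conjTranspose_diagonal_mulVec, hy]
    simp [Pi.single_apply]

theorem map_univ_sq_eq_of_conjTranspose_mul_diagonal_mul_eq {Q₁ Q₂ : Matrix ι ι ℂ}
    (hQ₁ : IsUnit Q₁) (hQ₂ : IsUnit Q₂) {d₁ d₂ : ι → ℂ} (hd₁ : ∀ i, ‖d₁ i‖ = 1)
    (hd₂ : ∀ i, ‖d₂ i‖ = 1) (h : Q₁ᴴ * diagonal d₁ * Q₁ = Q₂ᴴ * diagonal d₂ * Q₂) :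
    Finset.univ.val.map (d₁ ^ 2) = Finset.univ.val.map (d₂ ^ 2) := by
  have hD : IsUnit (diagonal d₁) := isUnit_diagonal.mpr <| Pi.isUnit_iff.mpr fun i =>
    isUnit_iff_ne_zero.mpr <| norm_ne_zero_iff.mp (by rw [hd₁ i]; exact one_ne_zero)
  have hA : IsUnit (Q₁ᴴ * diagonal d₁ * Q₁)ᴴ :=
    (isUnit_conjTranspose _).mpr ((((isUnit_conjTranspose _).mpr hQ₁).mul hD).mul hQ₁)
  have hB : Q₁⁻¹ * diagonal (d₁ ^ 2) * Q₁ = Q₂⁻¹ * diagonal (d₂ ^ 2) * Q₂ :=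
    hA.mul_left_cancel <| by
      rw [conjTranspose_mul_diagonal_sq_eq hQ₁ hd₁, h, conjTranspose_mul_diagonal_sq_eq hQ₂ hd₂]
  rw [← roots_charpoly_diagonal, ← roots_charpoly_diagonal, ← charpoly_nonsing_inv_mul_mul hQ₁, hB,
    charpoly_nonsing_inv_mul_mul hQ₂]

end Congruence

section Sectorial

variable {n : ℕ}

open scoped ComplexOrder in
theorem star_dotProduct_mulVec_ne_zero {A : Matrix (Fin n) (Fin n) ℂ}
    (hA : (0 : ℂ) ∉ numRange A) {y : Fin n → ℂ} (hy : y ≠ 0) : star y ⬝ᵥ (A *ᵥ y) ≠ 0 := by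
  intro h0
  obtain ⟨r, hr, hyr⟩ : ∃ r : ℝ, 0 < r ∧ (r : ℂ) = star y ⬝ᵥ y :=
    RCLike.pos_iff_exists_ofReal.mp (dotProduct_star_self_pos_iff.mpr hy)
  set c : ℝ := (√r)⁻¹
  have hc : c * c * r = 1 := by
    rw [← sq, inv_pow, Real.sq_sqrt hr.le, inv_mul_cancel₀ hr.ne']
  refine hA ⟨c • y, ?_, ?_⟩
  · rw [star_smul, star_trivial, smul_dotProduct, dotProduct_smul, ← hyr, smul_smul,
      Complex.real_smul]
    exact_mod_cast hc
  · rw [mulVec_smul, star_smul, star_trivial, smul_dotProduct, dotProduct_smul, h0, smul_zero,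
      smul_zero]

theorem zero_notMem_convexHull_of_zero_notMem_numRange {Q : Matrix (Fin n) (Fin n) ℂ}
    (hQ : IsUnit Q) {d : Fin n → ℂ} (hA : (0 : ℂ) ∉ numRange (Qᴴ * diagonal d * Q)) :
    (0 : ℂ) ∉ convexHull ℝ (Set.range d) := by
  rw [← linearCombination_image_stdSimplex]
  rintro ⟨t, ht, h0⟩
  obtain ⟨y, hy⟩ := mulVec_surjective_iff_isUnit.mpr hQ fun i => (√(t i) : ℂ)
  refine star_dotProduct_mulVec_ne_zero hA (y := y) ?_ ?_
  · rintro rfl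
    have ht0 : ∀ i, t i = 0 := fun i => by
      have hi := congrFun hy i
      rw [mulVec_zero, Pi.zero_apply, eq_comm, Complex.ofReal_eq_zero] at hi
      exact (Real.sqrt_eq_zero (ht.1 i)).mp hi
    simpa [ht0] using ht.2
  · rw [star_dotProduct_conjTranspose_diagonal_mulVec, hy, ← h0, Fintype.linearCombination_apply]
    refine Finset.sum_congr rfl fun i _ => ?_
    rw [Complex.normSq_ofReal, Real.mul_self_sqrt (ht.1 i)]

end Sectorial

/-- Uniqueness of the diagonal unitary factor in the sectorial decomposition:
two sectorial decompositions of the same sectorial matrix have the same diagonal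
entries up to permutation. -/
theorem sectorial_decomposition_unique (n : ℕ)
    (A Q₁ Q₂ : Matrix (Fin n) (Fin n) ℂ) (d₁ d₂ : Fin n → ℂ)
    (hA : (0 : ℂ) ∉ numRange A)
    (hQ₁ : IsUnit Q₁) (hQ₂ : IsUnit Q₂)
    (hd₁ : ∀ i, ‖d₁ i‖ = 1) (hd₂ : ∀ i, ‖d₂ i‖ = 1)
    (h₁ : A = Q₁ᴴ * Matrix.diagonal d₁ * Q₁)
    (h₂ : A = Q₂ᴴ * Matrix.diagonal d₂ * Q₂) :
    ∃ σ : Equiv.Perm (Fin n), d₂ = d₁ ∘ σ := by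
  have h : Q₁ᴴ * diagonal d₁ * Q₁ = Q₂ᴴ * diagonal d₂ * Q₂ := h₁.symm.trans h₂
  obtain ⟨f, hf₁⟩ := exists_forall_pos_of_zero_notMem_convexHull
    (zero_notMem_convexHull_of_zero_notMem_numRange hQ₁ (h₁ ▸ hA))
  have hf₂ : ∀ j, 0 < f (d₂ j) := fun j => by
    obtain ⟨w, hw, hw0, hj⟩ :=
      exists_nonneg_ne_zero_eq_sum_smul_of_conjTranspose_mul_diagonal_mul_eq hQ₁ hQ₂ h j
    exact hj ▸ apply_sum_smul_pos (f : ℂ →ₗ[ℝ] ℝ) hf₁ hw hw0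
  obtain ⟨σ, hσ⟩ := exists_perm_eq_comp_of_map_univ_eq
    (map_univ_sq_eq_of_conjTranspose_mul_diagonal_mul_eq hQ₂ hQ₁ hd₂ hd₁ h.symm)
  exact ⟨σ, funext fun i =>
    eq_of_sq_eq_of_apply_pos (f : ℂ →ₗ[ℝ] ℝ) (hf₂ i) (hf₁ (σ i)) (congrFun hσ i)⟩
end

section
/- Let A ∈ ℂ^{n×n} be sectorial with sectorial decomposition A = Q* D Q. For any invertible T ∈ ℂ^{n×n}, the matrix T* A T is also sectorial and in any sectorial decomposition T* A T = P* D' P (P invertible, D' diagonal unitary), the diagonal entries of D' coincide with those of D up to permutation. -/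
open Matrix

private lemma aux_conj_mul_self (z : ℂ) : starRingEnd ℂ z * z = ((‖z‖^2 : ℝ) : ℂ) := by
  rw [RCLike.conj_mul]; norm_cast

private lemma aux_mem_numRange {n : ℕ} {A : Matrix (Fin n) (Fin n) ℂ} {w : Fin n → ℂ}
    (hw : w ≠ 0) (h : star w ⬝ᵥ (A *ᵥ w) = 0) : (0:ℂ) ∈ numRange A := by
  set s : ℝ := ∑ i, Complex.normSq (w i) with hs
  have hsw : star w ⬝ᵥ w = (s : ℂ) := by
    simp [dotProduct, hs, Pi.star_apply, Complex.normSq_eq_conj_mul_self]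
  have hspos : 0 < s := by
    obtain ⟨i, hi⟩ : ∃ i, w i ≠ 0 := by
      by_contra hc
      push_neg at hc
      exact hw (funext hc)
    apply Finset.sum_pos' (fun j _ => Complex.normSq_nonneg _)
    exact ⟨i, Finset.mem_univ i, Complex.normSq_pos.mpr hi⟩
  set r : ℝ := Real.sqrt s with hr
  have hrpos : 0 < r := Real.sqrt_pos.mpr hspos
  refine ⟨((r:ℂ))⁻¹ • w, ?_, ?_⟩
  · have hst : star (((r:ℂ))⁻¹ • w) = ((r:ℂ))⁻¹ • star w := by
      simp [star_smul, Complex.conj_ofReal, star_inv₀]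
    rw [hst, smul_dotProduct, dotProduct_smul, hsw]
    have hmul : ((r:ℂ))⁻¹ * (((r:ℂ))⁻¹ * (s:ℂ)) = ((r*r : ℝ):ℂ)⁻¹ * (s:ℂ) := by
      push_cast
      ring
    rw [smul_eq_mul, smul_eq_mul, hmul, Real.mul_self_sqrt hspos.le]
    rw [inv_mul_cancel₀ (by exact_mod_cast hspos.ne')]
  · have hst : star (((r:ℂ))⁻¹ • w) = ((r:ℂ))⁻¹ • star w := by
      simp [star_smul, Complex.conj_ofReal, star_inv₀]
    rw [mulVec_smul, hst, smul_dotProduct, dotProduct_smul, h]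
    simp

private lemma aux_form_expand {n : ℕ} (A : Matrix (Fin n) (Fin n) ℂ) (u v : Fin n → ℂ) (a b : ℂ) :
    star (a • u + b • v) ⬝ᵥ (A *ᵥ (a • u + b • v)) =
      (starRingEnd ℂ a) * a * (star u ⬝ᵥ (A *ᵥ u)) + (starRingEnd ℂ b) * b * (star v ⬝ᵥ (A *ᵥ v))
      + (starRingEnd ℂ a) * b * (star u ⬝ᵥ (A *ᵥ v)) + (starRingEnd ℂ b) * a * (star v ⬝ᵥ (A *ᵥ u)) := by
  simp only [star_add, star_smul, mulVec_add, mulVec_smul, add_dotProduct, dotProduct_add,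
    smul_dotProduct, dotProduct_smul, smul_eq_mul]
  simp only [Complex.star_def]
  ring

/-- Key geometric fact: a matrix whose numerical range misses `0` cannot take two
quadratic-form values that are opposite nonzero complex numbers. -/
private lemma aux_no_antipodal {n : ℕ} {A : Matrix (Fin n) (Fin n) ℂ}
    (hA : (0:ℂ) ∉ numRange A)
    {u v : Fin n → ℂ} (hv : v ≠ 0) {z : ℂ} (hz : z ≠ 0)
    (hfu : star u ⬝ᵥ (A *ᵥ u) = z) (hfv : star v ⬝ᵥ (A *ᵥ v) = -z) : False := by
  classical
  have hznorm : (‖z‖ : ℂ) ≠ 0 := Complex.ofReal_ne_zero.mpr (norm_ne_zero_iff.mpr hz)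
  set b : ℂ := (starRingEnd ℂ) z / ‖z‖ with hb
  have hbz : b * z = (‖z‖ : ℂ) := by
    rw [hb, div_mul_eq_mul_div, aux_conj_mul_self]
    push_cast
    rw [sq, mul_div_assoc, div_self hznorm, mul_one]
  have hbne : b ≠ 0 := div_ne_zero (star_ne_zero.mpr hz) hznorm
  set p : ℂ := star u ⬝ᵥ (A *ᵥ v) with hp
  set q : ℂ := star v ⬝ᵥ (A *ᵥ u) with hq
  set K : ℂ := b * p - starRingEnd ℂ (b * q) with hK
  set μ : ℂ := if K = 0 then 1 else (starRingEnd ℂ K) / ‖K‖ with hμ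
  have hμnorm : ‖μ‖ = 1 := by
    rw [hμ]
    split_ifs with h
    · simp
    · rw [norm_div]
      simp only [RCLike.norm_conj, Complex.norm_real, Real.norm_eq_abs, abs_norm]
      exact div_self (norm_ne_zero_iff.mpr h)
  have hμμ : starRingEnd ℂ μ * μ = 1 := by
    rw [aux_conj_mul_self, hμnorm]; norm_num
  have hμK : (μ * K).im = 0 := by
    rw [hμ]
    split_ifs with h
    · simp [h]
    · rw [div_mul_eq_mul_div, aux_conj_mul_self]
      rw [show ((‖K‖^2:ℝ):ℂ) / ((‖K‖:ℝ):ℂ) = (((‖K‖^2/‖K‖ : ℝ)):ℂ) by push_cast; ring]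
      exact Complex.ofReal_im _
  have key : (μ * (b * p) + (starRingEnd ℂ μ) * (b * q)).im = 0 := by
    have hsplit : μ * (b * p) + (starRingEnd ℂ μ) * (b * q)
        = μ * K + ((μ * starRingEnd ℂ (b*q)) + starRingEnd ℂ (μ * starRingEnd ℂ (b*q))) := by
      rw [hK]
      simp only [_root_.map_mul, map_sub, Complex.conj_conj]
      ring
    rw [hsplit, Complex.add_im, hμK, zero_add, Complex.add_conj]
    norm_num
  set c : ℝ := (μ * (b * p) + (starRingEnd ℂ μ) * (b * q)).re with hc
  set g : ℝ → ℝ := fun t => ((1-t)^2 - t^2) * ‖z‖ + t*(1-t) * c with hg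
  have hg0 : g 0 = ‖z‖ := by simp [hg]
  have hg1 : g 1 = -‖z‖ := by simp [hg]
  have hcont : ContinuousOn g (Set.Icc 0 1) := by fun_prop
  have hzpos : (0:ℝ) < ‖z‖ := norm_pos_iff.mpr hz
  obtain ⟨t0, ht0mem, ht0⟩ : ∃ t0 ∈ Set.Icc (0:ℝ) 1, g t0 = 0 := by
    have hiv := intermediate_value_Icc' (by norm_num : (0:ℝ) ≤ 1) hcont
    have h0 : (0:ℝ) ∈ Set.Icc (g 1) (g 0) := by
      rw [hg0, hg1]; constructor <;> linarith
    obtain ⟨t0, ht0m, ht0⟩ := hiv h0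
    exact ⟨t0, ht0m, ht0⟩
  have hgt0 : ((1-t0)^2 - t0^2) * ‖z‖ + t0*(1-t0) * c = 0 := by
    have h := ht0; rw [hg] at h; simpa using h
  set w : Fin n → ℂ := ((1 - t0 : ℝ) : ℂ) • u + (((t0:ℝ):ℂ) * μ) • v with hw
  have hform : star w ⬝ᵥ (A *ᵥ w) = 0 := by
    rw [hw, aux_form_expand, hfu, hfv, ← hp, ← hq]
    have hconj : starRingEnd ℂ ((1 - t0 : ℝ):ℂ) = ((1-t0 : ℝ):ℂ) := Complex.conj_ofReal _
    have hconjt : starRingEnd ℂ ((t0 : ℝ):ℂ) = ((t0 : ℝ):ℂ) := Complex.conj_ofReal _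
    have hval : b * (starRingEnd ℂ ((1 - t0 : ℝ):ℂ) * ((1 - t0:ℝ):ℂ) * z
        + starRingEnd ℂ (((t0:ℝ):ℂ) * μ) * (((t0:ℝ):ℂ) * μ) * (-z)
        + starRingEnd ℂ ((1 - t0:ℝ):ℂ) * (((t0:ℝ):ℂ) * μ) * p
        + starRingEnd ℂ (((t0:ℝ):ℂ) * μ) * ((1 - t0:ℝ):ℂ) * q) = 0 := by
      have expand : b * (starRingEnd ℂ ((1 - t0 : ℝ):ℂ) * ((1 - t0:ℝ):ℂ) * z
        + starRingEnd ℂ (((t0:ℝ):ℂ) * μ) * (((t0:ℝ):ℂ) * μ) * (-z)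
        + starRingEnd ℂ ((1 - t0:ℝ):ℂ) * (((t0:ℝ):ℂ) * μ) * p
        + starRingEnd ℂ (((t0:ℝ):ℂ) * μ) * ((1 - t0:ℝ):ℂ) * q)
        = ((1-t0:ℝ):ℂ)^2 * (b * z) - ((t0:ℝ):ℂ)^2 * (starRingEnd ℂ μ * μ) * (b*z)
          + ((t0:ℝ):ℂ) * ((1-t0:ℝ):ℂ) * (μ * (b*p) + starRingEnd ℂ μ * (b*q)) := by
        rw [_root_.map_mul, hconj, hconjt]
        ring
      rw [expand, hμμ, hbz]
      have step : ((1-t0:ℝ):ℂ)^2 * (‖z‖:ℂ) - ((t0:ℝ):ℂ)^2 * 1 * (‖z‖:ℂ)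
          + ((t0:ℝ):ℂ) * ((1-t0:ℝ):ℂ) * (μ * (b*p) + starRingEnd ℂ μ * (b*q))
          = (((((1-t0)^2 - t0^2) * ‖z‖ : ℝ)) : ℂ)
            + ((t0 * (1-t0) : ℝ) : ℂ) * (μ * (b*p) + starRingEnd ℂ μ * (b*q)) := by
        push_cast; ring
      rw [step]
      apply Complex.ext
      · simp only [Complex.add_re, Complex.ofReal_re, Complex.re_ofReal_mul, ← hc,
          Complex.zero_re]
        linarith
      · simp only [Complex.add_im, Complex.ofReal_im, Complex.zero_im, zero_add,
          Complex.im_ofReal_mul, key, mul_zero]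
    rcases mul_eq_zero.mp hval with h | h
    · exact absurd h hbne
    · exact h
  have hwne : w ≠ 0 := by
    intro hw0
    rcases ne_or_eq t0 1 with ht1 | ht1
    · have h1t : ((1 - t0 : ℝ):ℂ) ≠ 0 := by
        simp only [ne_eq, Complex.ofReal_eq_zero]
        intro hh; apply ht1; linarith
      have h2 : ((1 - t0 : ℝ):ℂ) • u = -((((t0:ℝ):ℂ) * μ) • v) := by
        rw [← add_eq_zero_iff_eq_neg]
        rw [hw] at hw0; exact hw0
      set cc : ℂ := ((1-t0:ℝ):ℂ)⁻¹ * -(((t0:ℝ):ℂ) * μ) with hcc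
      have hucc : u = cc • v := by
        have h4 : ((1-t0:ℝ):ℂ)⁻¹ • (((1-t0:ℝ):ℂ) • u)
            = ((1-t0:ℝ):ℂ)⁻¹ • (-((((t0:ℝ):ℂ) * μ) • v)) := by rw [h2]
        rw [smul_smul, inv_mul_cancel₀ h1t, one_smul, ← smul_neg, smul_smul] at h4
        rw [h4, hcc, smul_neg, ← neg_smul]
        congr 1
        ring
      have hcv : star (cc • v) ⬝ᵥ (A *ᵥ (cc • v)) = starRingEnd ℂ cc * cc * (-z) := by
        rw [show (cc • v : Fin n → ℂ) = (0:ℂ) • u + cc • v by simp, aux_form_expand, hfu, hfv]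
        simp
      have hz2 : z = starRingEnd ℂ cc * cc * (-z) := by
        conv_lhs => rw [← hfu, hucc]
        exact hcv
      have h4 : (1 + starRingEnd ℂ cc * cc) * z = 0 := by linear_combination hz2
      have h5 : (1 + starRingEnd ℂ cc * cc) ≠ 0 := by
        rw [aux_conj_mul_self]
        intro hh
        rw [show (1:ℂ) + ((‖cc‖^2:ℝ):ℂ) = (((1 + ‖cc‖^2 : ℝ)):ℂ) by push_cast; ring] at hh
        rw [Complex.ofReal_eq_zero] at hh
        nlinarith [norm_nonneg cc]
      rcases mul_eq_zero.mp h4 with h | h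
      · exact absurd h h5
      · exact hz h
    · apply hv
      rw [hw, ht1] at hw0
      simp only [sub_self, Complex.ofReal_zero, zero_smul, zero_add, Complex.ofReal_one,
        one_mul] at hw0
      have hμne : μ ≠ 0 := by
        intro hh; rw [hh] at hμnorm; simp at hμnorm
      funext i
      have hi := congrFun hw0 i
      simp only [Pi.smul_apply, smul_eq_mul, Pi.zero_apply] at hi ⊢
      exact (mul_eq_zero.mp hi).resolve_left hμne
  exact hA (aux_mem_numRange hwne hform)

open Polynomial in
private lemma aux_charpoly_diagonal {n : ℕ} (d : Fin n → ℂ) :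
    (Matrix.diagonal d).charpoly = ∏ i, (X - C (d i)) := by
  rw [Matrix.charpoly]
  have hdiag : charmatrix (Matrix.diagonal d)
      = Matrix.diagonal (fun i => (X:ℂ[X]) - C (d i)) := by
    ext i j
    by_cases h : i = j
    · subst h
      rw [charmatrix_apply_eq, Matrix.diagonal_apply_eq, Matrix.diagonal_apply_eq]
    · rw [charmatrix_apply_ne _ _ _ h, Matrix.diagonal_apply_ne _ h,
        Matrix.diagonal_apply_ne _ h, map_zero, neg_zero]
  rw [hdiag, Matrix.det_diagonal]

open Polynomial in
private lemma aux_charpoly_conj {n : ℕ} {S : Matrix (Fin n) (Fin n) ℂ} (hS : IsUnit S)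
    (M : Matrix (Fin n) (Fin n) ℂ) : (S * M * S⁻¹).charpoly = M.charpoly := by
  have hdet : IsUnit S.det := (Matrix.isUnit_iff_isUnit_det S).mp hS
  have hSS : S * S⁻¹ = 1 := Matrix.mul_nonsing_inv S hdet
  have hchar : charmatrix (S * M * S⁻¹)
      = S.map C * charmatrix M * (S⁻¹).map C := by
    unfold charmatrix
    rw [Matrix.mul_sub, Matrix.sub_mul]
    congr 1
    · rw [Matrix.scalar_apply, ← Matrix.smul_one_eq_diagonal, mul_smul_comm, mul_one,
        Matrix.smul_mul, ← Matrix.map_mul, hSS, Matrix.map_one (⇑C) (map_zero C) (map_one C)]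
    · show (S * M * S⁻¹).map ⇑C = _
      rw [Matrix.map_mul, Matrix.map_mul]
      rfl
  rw [Matrix.charpoly, Matrix.charpoly, hchar, Matrix.det_mul, Matrix.det_mul]
  have h1 : (S.map C).det * ((S⁻¹).map C).det = 1 := by
    rw [← Matrix.det_mul, ← Matrix.map_mul, hSS]
    rw [Matrix.map_one (⇑C) (map_zero C) (map_one C), Matrix.det_one]
  calc (S.map C).det * (charmatrix M).det * ((S⁻¹).map C).det
      = (S.map C).det * ((S⁻¹).map C).det * (charmatrix M).det := by ring
    _ = (charmatrix M).det := by rw [h1, one_mul]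

private lemma aux_multiset_perm {n : ℕ} (f g : Fin n → ℂ)
    (h : Multiset.map f Finset.univ.val = Multiset.map g Finset.univ.val) :
    ∃ σ : Equiv.Perm (Fin n), f = g ∘ σ := by
  classical
  have hcard : ∀ c : ℂ, Fintype.card {i // f i = c} = Fintype.card {i // g i = c} := by
    intro c
    have hcount := congrArg (Multiset.count c) h
    rw [Multiset.count_map, Multiset.count_map] at hcount
    rw [Fintype.card_subtype, Fintype.card_subtype]
    simpa [Finset.filter, eq_comm] using hcount
  have e : ∀ c : ℂ, {i // f i = c} ≃ {i // g i = c} := fun c =>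
    Fintype.equivOfCardEq (hcard c)
  refine ⟨Equiv.ofFiberEquiv e, ?_⟩
  funext i
  exact (Equiv.ofFiberEquiv_map e i).symm

private lemma aux_diag_single {n : ℕ} (d : Fin n → ℂ) (i : Fin n) :
    star (Pi.single i (1:ℂ)) ⬝ᵥ (Matrix.diagonal d *ᵥ Pi.single i 1) = d i := by
  simp [dotProduct, Matrix.mulVec, Pi.single_apply, Matrix.diagonal_apply]

private lemma aux_congr_form {n : ℕ} (B M : Matrix (Fin n) (Fin n) ℂ) (y : Fin n → ℂ) :
    star y ⬝ᵥ ((Bᴴ * M * B) *ᵥ y) = star (B *ᵥ y) ⬝ᵥ (M *ᵥ (B *ᵥ y)) := by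
  rw [star_mulVec, ← Matrix.mulVec_mulVec, ← Matrix.mulVec_mulVec, dotProduct_mulVec]

private lemma aux_unit_conjTranspose {n : ℕ} {B : Matrix (Fin n) (Fin n) ℂ}
    (hB : IsUnit B) : IsUnit Bᴴ := by
  have hdet := (Matrix.isUnit_iff_isUnit_det B).mp hB
  exact ⟨⟨Bᴴ, (B⁻¹)ᴴ,
    by rw [← conjTranspose_mul, Matrix.nonsing_inv_mul B hdet, conjTranspose_one],
    by rw [← conjTranspose_mul, Matrix.mul_nonsing_inv B hdet, conjTranspose_one]⟩, rfl⟩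

private lemma aux_unit_inv {n : ℕ} {B : Matrix (Fin n) (Fin n) ℂ}
    (hB : IsUnit B) : IsUnit B⁻¹ := by
  have hdet := (Matrix.isUnit_iff_isUnit_det B).mp hB
  exact ⟨⟨B⁻¹, B, Matrix.nonsing_inv_mul B hdet, Matrix.mul_nonsing_inv B hdet⟩, rfl⟩

private lemma aux_mulVec_ne_zero {n : ℕ} {B : Matrix (Fin n) (Fin n) ℂ}
    (hB : IsUnit B) {y : Fin n → ℂ} (hy : y ≠ 0) : B *ᵥ y ≠ 0 := by
  have hdet := (Matrix.isUnit_iff_isUnit_det B).mp hB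
  intro h
  apply hy
  have : B⁻¹ *ᵥ (B *ᵥ y) = y := by
    rw [Matrix.mulVec_mulVec, Matrix.nonsing_inv_mul B hdet, Matrix.one_mulVec]
  rw [← this, h, Matrix.mulVec_zero]

private lemma aux_single_ne_zero {n : ℕ} (i : Fin n) :
    (Pi.single i 1 : Fin n → ℂ) ≠ 0 := by
  intro h
  have := congrFun h i
  simp at this

private lemma aux_diag_unitary {n : ℕ} {d : Fin n → ℂ} (hd : ∀ i, ‖d i‖ = 1) :
    Matrix.diagonal d * (Matrix.diagonal d)ᴴ = 1 ∧
    (Matrix.diagonal d)ᴴ * Matrix.diagonal d = 1 := by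
  have hone : ∀ i, d i * starRingEnd ℂ (d i) = 1 := fun i => by
    rw [mul_comm, aux_conj_mul_self, hd i]; norm_num
  have hone' : ∀ i, starRingEnd ℂ (d i) * d i = 1 := fun i => by
    rw [mul_comm]; exact hone i
  constructor
  · rw [Matrix.diagonal_conjTranspose, Matrix.diagonal_mul_diagonal]
    ext i j
    rcases eq_or_ne i j with rfl | hij
    · rw [Matrix.diagonal_apply_eq, Matrix.one_apply_eq]
      exact hone i
    · rw [Matrix.diagonal_apply_ne _ hij, Matrix.one_apply_ne hij]
  · rw [Matrix.diagonal_conjTranspose, Matrix.diagonal_mul_diagonal]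
    ext i j
    rcases eq_or_ne i j with rfl | hij
    · rw [Matrix.diagonal_apply_eq, Matrix.one_apply_eq]
      exact hone' i
    · rw [Matrix.diagonal_apply_ne _ hij, Matrix.one_apply_ne hij]

/-- Phase invariance under congruence: if `A = Qᴴ D Q` is sectorial and `T` is
invertible, then `Tᴴ A T` is sectorial and any sectorial decomposition of it has the
same diagonal unitary entries as `D`, up to permutation. -/
theorem phases_congruence_invariant (n : ℕ)
    (A Q T : Matrix (Fin n) (Fin n) ℂ) (d : Fin n → ℂ)
    (hA : (0 : ℂ) ∉ numRange A)
    (hQ : IsUnit Q) (hd : ∀ i, ‖d i‖ = 1)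
    (hAdec : A = Qᴴ * Matrix.diagonal d * Q)
    (hT : IsUnit T) :
    (0 : ℂ) ∉ numRange (Tᴴ * A * T) ∧
    ∀ (P : Matrix (Fin n) (Fin n) ℂ) (d' : Fin n → ℂ),
      IsUnit P → (∀ i, ‖d' i‖ = 1) →
      Tᴴ * A * T = Pᴴ * Matrix.diagonal d' * P →
      ∃ σ : Equiv.Perm (Fin n), d' = d ∘ σ := by
  classical
  have hQdet := (Matrix.isUnit_iff_isUnit_det Q).mp hQ
  have hTdet := (Matrix.isUnit_iff_isUnit_det T).mp hT
  constructor
  · -- sectoriality of the congruence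
    rintro ⟨x, hx1, hx2⟩
    have hxne : x ≠ 0 := by
      intro h
      rw [h] at hx1
      simp [dotProduct] at hx1
    have hTx : T *ᵥ x ≠ 0 := aux_mulVec_ne_zero hT hxne
    have hform : star (T *ᵥ x) ⬝ᵥ (A *ᵥ (T *ᵥ x)) = 0 := by
      rw [← aux_congr_form T A x, ← hx2]
    exact hA (aux_mem_numRange hTx hform)
  · intro P d' hP hd' hPdec
    have hPdet := (Matrix.isUnit_iff_isUnit_det P).mp hP
    -- the congruence matrix between the two diagonal factors
    set R : Matrix (Fin n) (Fin n) ℂ := (Q * T) * P⁻¹ with hRdef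
    have hR : IsUnit R := (hQ.mul hT).mul (aux_unit_inv hP)
    have hRdet := (Matrix.isUnit_iff_isUnit_det R).mp hR
    have hRH : IsUnit Rᴴ := aux_unit_conjTranspose hR
    have hRHdet := (Matrix.isUnit_iff_isUnit_det Rᴴ).mp hRH
    have hmid : Pᴴ * Matrix.diagonal d' * P = (Q*T)ᴴ * Matrix.diagonal d * (Q*T) := by
      rw [← hPdec, hAdec, conjTranspose_mul]
      noncomm_ring
    have hPP : P * P⁻¹ = 1 := Matrix.mul_nonsing_inv P hPdet
    have hPH : (P⁻¹)ᴴ * Pᴴ = 1 := by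
      rw [← conjTranspose_mul, hPP, conjTranspose_one]
    have hD'R : Matrix.diagonal d' = Rᴴ * Matrix.diagonal d * R := by
      have hRH' : Rᴴ = (P⁻¹)ᴴ * (Q*T)ᴴ := by rw [hRdef, conjTranspose_mul]
      rw [hRdef, hRH']
      calc Matrix.diagonal d'
          = ((P⁻¹)ᴴ * Pᴴ) * Matrix.diagonal d' * (P * P⁻¹) := by
            rw [hPH, hPP, one_mul, mul_one]
        _ = (P⁻¹)ᴴ * (Pᴴ * Matrix.diagonal d' * P) * P⁻¹ := by noncomm_ring
        _ = (P⁻¹)ᴴ * ((Q*T)ᴴ * Matrix.diagonal d * (Q*T)) * P⁻¹ := by rw [hmid]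
        _ = (P⁻¹)ᴴ * (Q*T)ᴴ * Matrix.diagonal d * (Q * T * P⁻¹) := by noncomm_ring
    obtain ⟨hDu, _⟩ := aux_diag_unitary hd
    obtain ⟨_, hD'u⟩ := aux_diag_unitary hd'
    -- the squared diagonals are similar
    have h1 : Rᴴ * (((Matrix.diagonal d)ᴴ * (R * Rᴴ) * Matrix.diagonal d) * R) = 1 := by
      have e : (Rᴴ * Matrix.diagonal d * R)ᴴ = Rᴴ * (Matrix.diagonal d)ᴴ * R := by
        simp only [conjTranspose_mul, conjTranspose_conjTranspose]
        noncomm_ring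
      calc Rᴴ * (((Matrix.diagonal d)ᴴ * (R * Rᴴ) * Matrix.diagonal d) * R)
          = (Rᴴ * (Matrix.diagonal d)ᴴ * R) * (Rᴴ * Matrix.diagonal d * R) := by noncomm_ring
        _ = (Rᴴ * Matrix.diagonal d * R)ᴴ * (Rᴴ * Matrix.diagonal d * R) := by rw [e]
        _ = (Matrix.diagonal d')ᴴ * Matrix.diagonal d' := by rw [← hD'R]
        _ = 1 := hD'u
    have hFR : (Rᴴ)⁻¹ = ((Matrix.diagonal d)ᴴ * (R * Rᴴ) * Matrix.diagonal d) * R :=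
      Matrix.inv_eq_right_inv h1
    have hFE : ((Matrix.diagonal d)ᴴ * (R * Rᴴ) * Matrix.diagonal d) * (R * Rᴴ) = 1 := by
      calc ((Matrix.diagonal d)ᴴ * (R * Rᴴ) * Matrix.diagonal d) * (R * Rᴴ)
          = (((Matrix.diagonal d)ᴴ * (R * Rᴴ) * Matrix.diagonal d) * R) * Rᴴ := by noncomm_ring
        _ = (Rᴴ)⁻¹ * Rᴴ := by rw [← hFR]
        _ = 1 := Matrix.nonsing_inv_mul Rᴴ hRHdet
    have hEDE : (R * Rᴴ) * Matrix.diagonal d * (R * Rᴴ) = Matrix.diagonal d := by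
      have h3 : Matrix.diagonal d * ((((Matrix.diagonal d)ᴴ * (R * Rᴴ) * Matrix.diagonal d)
          * (R * Rᴴ))) = Matrix.diagonal d * 1 := by rw [hFE]
      rw [mul_one] at h3
      calc (R * Rᴴ) * Matrix.diagonal d * (R * Rᴴ)
          = (Matrix.diagonal d * (Matrix.diagonal d)ᴴ) *
            ((R * Rᴴ) * Matrix.diagonal d * (R * Rᴴ)) := by rw [hDu, one_mul]
        _ = Matrix.diagonal d * ((((Matrix.diagonal d)ᴴ * (R * Rᴴ) * Matrix.diagonal d)
            * (R * Rᴴ))) := by noncomm_ring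
        _ = Matrix.diagonal d := h3
    have hkey : Matrix.diagonal d' * Matrix.diagonal d'
        = Rᴴ * (Matrix.diagonal d * Matrix.diagonal d) * (Rᴴ)⁻¹ := by
      have h4 : Matrix.diagonal d' * Matrix.diagonal d' * Rᴴ
          = Rᴴ * (Matrix.diagonal d * Matrix.diagonal d) := by
        rw [hD'R]
        calc (Rᴴ * Matrix.diagonal d * R) * (Rᴴ * Matrix.diagonal d * R) * Rᴴ
            = Rᴴ * (Matrix.diagonal d * ((R * Rᴴ) * Matrix.diagonal d * (R * Rᴴ))) := by
              noncomm_ring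
          _ = Rᴴ * (Matrix.diagonal d * Matrix.diagonal d) := by rw [hEDE]
      calc Matrix.diagonal d' * Matrix.diagonal d'
          = Matrix.diagonal d' * Matrix.diagonal d' * (Rᴴ * (Rᴴ)⁻¹) := by
            rw [Matrix.mul_nonsing_inv Rᴴ hRHdet, Matrix.mul_one]
        _ = (Matrix.diagonal d' * Matrix.diagonal d' * Rᴴ) * (Rᴴ)⁻¹ := by noncomm_ring
        _ = Rᴴ * (Matrix.diagonal d * Matrix.diagonal d) * (Rᴴ)⁻¹ := by rw [h4]
    -- equality of characteristic polynomials of the squared diagonals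
    have hcp : (Matrix.diagonal (fun i => d' i * d' i)).charpoly
        = (Matrix.diagonal (fun i => d i * d i)).charpoly := by
      have e1 : Matrix.diagonal (fun i => d' i * d' i)
          = Matrix.diagonal d' * Matrix.diagonal d' := by
        rw [Matrix.diagonal_mul_diagonal]
      have e2 : Matrix.diagonal (fun i => d i * d i)
          = Matrix.diagonal d * Matrix.diagonal d := by
        rw [Matrix.diagonal_mul_diagonal]
      rw [e1, e2, hkey, aux_charpoly_conj hRH]
    have hprod : ∏ i, (Polynomial.X - Polynomial.C (d' i * d' i))
        = ∏ i, (Polynomial.X - Polynomial.C (d i * d i)) := by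
      rw [← aux_charpoly_diagonal, ← aux_charpoly_diagonal, hcp]
    have hms : Multiset.map (fun i => d' i * d' i) Finset.univ.val
        = Multiset.map (fun i => d i * d i) Finset.univ.val := by
      have e1 : ∀ (f : Fin n → ℂ), ∏ i, (Polynomial.X - Polynomial.C (f i))
          = (Multiset.map (fun a : ℂ => Polynomial.X - Polynomial.C a)
              (Multiset.map f Finset.univ.val)).prod := by
        intro f
        rw [Multiset.map_map]
        rfl
      have h5 := congrArg Polynomial.roots hprod
      rw [e1 (fun i => d' i * d' i), e1 (fun i => d i * d i),
        Polynomial.roots_multiset_prod_X_sub_C, Polynomial.roots_multiset_prod_X_sub_C] at h5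
      exact h5
    obtain ⟨σ, hσ⟩ := aux_multiset_perm (fun i => d' i * d' i) (fun i => d i * d i) hms
    refine ⟨σ, ?_⟩
    funext i
    have hsq : d' i * d' i = d (σ i) * d (σ i) := congrFun hσ i
    have hfactor : (d' i - d (σ i)) * (d' i + d (σ i)) = 0 := by linear_combination hsq
    rcases mul_eq_zero.mp hfactor with h | h
    · exact sub_eq_zero.mp h
    · -- antipodal case: contradiction with sectoriality
      exfalso
      have hdne : d (σ i) ≠ 0 := by
        intro hh
        have := hd (σ i)
        rw [hh] at this
        simp at this
      -- witness for d (σ i)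
      set u : Fin n → ℂ := Q⁻¹ *ᵥ Pi.single (σ i) 1 with hu
      have hQu : Q *ᵥ u = Pi.single (σ i) 1 := by
        rw [hu, Matrix.mulVec_mulVec, Matrix.mul_nonsing_inv Q hQdet, Matrix.one_mulVec]
      have hfu : star u ⬝ᵥ (A *ᵥ u) = d (σ i) := by
        rw [hAdec, aux_congr_form, hQu, aux_diag_single]
      -- witness for d' i
      set y : Fin n → ℂ := P⁻¹ *ᵥ Pi.single i 1 with hy
      have hPy : P *ᵥ y = Pi.single i 1 := by
        rw [hy, Matrix.mulVec_mulVec, Matrix.mul_nonsing_inv P hPdet, Matrix.one_mulVec]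
      have hyne : y ≠ 0 := by
        intro hh
        apply aux_single_ne_zero i
        rw [← hPy, hh, Matrix.mulVec_zero]
      set v : Fin n → ℂ := T *ᵥ y with hv
      have hvne : v ≠ 0 := aux_mulVec_ne_zero hT hyne
      have hfv : star v ⬝ᵥ (A *ᵥ v) = d' i := by
        rw [hv, ← aux_congr_form T A y, hPdec, aux_congr_form, hPy, aux_diag_single]
      have hd'neg : d' i = -(d (σ i)) := eq_neg_of_add_eq_zero_left h
      rw [hd'neg] at hfv
      exact aux_no_antipodal hA hvne hdne hfu hfv
end

section
/- Let A ∈ ℂ^{n×n} be sectorial with numerical range contained in the open upper half-plane, and let φ₁(A) ≥ … ≥ φₙ(A) ∈ (0,π) be its phases. Then the largest phase satisfies φ₁(A) = max over unit vectors x of arg(x*Ax), and the smallest phase satisfies φₙ(A) = min over unit vectors x of arg(x*Ax). -/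
/-!
Writing `y = Q x`, the quadratic form is `x* A x = ∑ |yᵢ|² e^{iφᵢ}`, a nonzero conic combination
of the points `e^{iφᵢ}` of the open upper half-plane. Rotating by `e^{-iθ}`, the sign of
`‖z‖ sin (arg z - θ) = ∑ cᵢ sin (φᵢ - θ)` shows that such a combination has argument between
`min φ` and `max φ`; both extremes are attained at `x = Q⁻¹ eₖ`, normalized.
-/

open Matrix

namespace Complex

theorem arg_mem_Ioo_of_im_pos {z : ℂ} (hz : 0 < z.im) : arg z ∈ Set.Ioo 0 Real.pi :=
  ⟨(arg_nonneg_iff.2 hz.le).lt_of_ne fun h => hz.ne' (arg_eq_zero_iff.1 h.symm).2,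
    arg_lt_pi_iff.2 (Or.inr hz.ne')⟩

theorem norm_mul_sin_arg_sub (z : ℂ) (θ : ℝ) :
    ‖z‖ * Real.sin (arg z - θ) = z.im * Real.cos θ - z.re * Real.sin θ := by
  rcases eq_or_ne z 0 with rfl | hz
  · simp
  have hnorm : ‖z‖ ≠ 0 := norm_ne_zero_iff.2 hz
  rw [Real.sin_sub, sin_arg, cos_arg hz]
  field_simp

section ConicCombination

variable {ι : Type*} [Fintype ι] (c φ : ι → ℝ)

theorem norm_mul_sin_arg_sum_sub (θ : ℝ) :
    ‖∑ i, (c i : ℂ) * exp (φ i * I)‖ * Real.sin (arg (∑ i, (c i : ℂ) * exp (φ i * I)) - θ) =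
      ∑ i, c i * Real.sin (φ i - θ) := by
  rw [norm_mul_sin_arg_sub]
  simp only [re_sum, im_sum, re_ofReal_mul, im_ofReal_mul, exp_ofReal_mul_I_re,
    exp_ofReal_mul_I_im, Finset.sum_mul, ← Finset.sum_sub_distrib, Real.sin_sub]
  exact Finset.sum_congr rfl fun i _ => by ring

variable {c φ}

theorem im_sum_ofReal_mul_exp_pos (hc : ∀ i, 0 ≤ c i) (hφ : ∀ i, φ i ∈ Set.Ioo 0 Real.pi)
    (hpos : ∃ j, 0 < c j) : 0 < (∑ i, (c i : ℂ) * exp (φ i * I)).im := by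
  obtain ⟨j, hj⟩ := hpos
  simp only [im_sum, im_ofReal_mul, exp_ofReal_mul_I_im]
  exact Finset.sum_pos' (fun i _ => mul_nonneg (hc i) (Real.sin_nonneg_of_nonneg_of_le_pi
    (hφ i).1.le (hφ i).2.le)) ⟨j, Finset.mem_univ j, mul_pos hj
      (Real.sin_pos_of_pos_of_lt_pi (hφ j).1 (hφ j).2)⟩

theorem arg_sum_le (hc : ∀ i, 0 ≤ c i) (hφ : ∀ i, φ i ∈ Set.Ioo 0 Real.pi)
    (hpos : ∃ j, 0 < c j) {θ : ℝ} (hθ : ∀ i, φ i ≤ θ) :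
    arg (∑ i, (c i : ℂ) * exp (φ i * I)) ≤ θ := by
  have him := im_sum_ofReal_mul_exp_pos hc hφ hpos
  have harg := arg_mem_Ioo_of_im_pos him
  by_contra! hlt
  have hsin : 0 < Real.sin (arg (∑ i, (c i : ℂ) * exp (φ i * I)) - θ) := by
    obtain ⟨j, -⟩ := hpos
    exact Real.sin_pos_of_pos_of_lt_pi (by linarith) (by linarith [(hφ j).1, hθ j, harg.2])
  have hsum : ∑ i, c i * Real.sin (φ i - θ) ≤ 0 :=
    Finset.sum_nonpos fun i _ => mul_nonpos_of_nonneg_of_nonpos (hc i)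
      (Real.sin_nonpos_of_nonpos_of_neg_pi_le (by linarith [hθ i])
        (by linarith [(hφ i).1, harg.2]))
  have hnorm : 0 < ‖∑ i, (c i : ℂ) * exp (φ i * I)‖ := norm_pos_iff.2 fun h => by simp [h] at him
  linarith [norm_mul_sin_arg_sum_sub c φ θ, mul_pos hnorm hsin]

theorem le_arg_sum (hc : ∀ i, 0 ≤ c i) (hφ : ∀ i, φ i ∈ Set.Ioo 0 Real.pi)
    (hpos : ∃ j, 0 < c j) {θ : ℝ} (hθ : ∀ i, θ ≤ φ i) :
    θ ≤ arg (∑ i, (c i : ℂ) * exp (φ i * I)) := by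
  have him := im_sum_ofReal_mul_exp_pos hc hφ hpos
  have harg := arg_mem_Ioo_of_im_pos him
  by_contra! hlt
  have hsin : Real.sin (arg (∑ i, (c i : ℂ) * exp (φ i * I)) - θ) < 0 := by
    obtain ⟨j, -⟩ := hpos
    exact Real.sin_neg_of_neg_of_neg_pi_lt (by linarith) (by linarith [(hφ j).2, hθ j, harg.1])
  have hsum : 0 ≤ ∑ i, c i * Real.sin (φ i - θ) :=
    Finset.sum_nonneg fun i _ => mul_nonneg (hc i)
      (Real.sin_nonneg_of_nonneg_of_le_pi (by linarith [hθ i])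
        (by linarith [(hφ i).2, harg.1]))
  have hnorm : 0 < ‖∑ i, (c i : ℂ) * exp (φ i * I)‖ := norm_pos_iff.2 fun h => by simp [h] at him
  linarith [norm_mul_sin_arg_sum_sub c φ θ, mul_pos hnorm (neg_pos.2 hsin)]

end ConicCombination

end Complex

namespace Matrix

variable {m n : Type*} [Fintype m] [Fintype n]

theorem star_dotProduct_conjTranspose_mul_diagonal_mul_mulVec [DecidableEq m]
    (Q : Matrix m n ℂ) (d : m → ℂ) (x : n → ℂ) :
    star x ⬝ᵥ ((Qᴴ * diagonal d * Q) *ᵥ x) = ∑ i, (Complex.normSq ((Q *ᵥ x) i) : ℂ) * d i := by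
  rw [← mulVec_mulVec, ← mulVec_mulVec, dotProduct_mulVec, ← star_mulVec]
  refine Finset.sum_congr rfl fun i _ => ?_
  rw [mulVec_diagonal, Pi.star_apply, Complex.normSq_eq_conj_mul_self, Complex.star_def]
  ring

def argNumericalRange (A : Matrix n n ℂ) : Set ℝ :=
  {θ | ∃ x : n → ℂ, star x ⬝ᵥ x = 1 ∧ θ = (star x ⬝ᵥ (A *ᵥ x)).arg}

open scoped ComplexOrder in
theorem arg_mem_argNumericalRange (A : Matrix n n ℂ) {x : n → ℂ} (hx : x ≠ 0) :
    (star x ⬝ᵥ (A *ᵥ x)).arg ∈ argNumericalRange A := by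
  obtain ⟨hs, him⟩ := Complex.pos_iff.1 (dotProduct_star_self_pos_iff.2 hx)
  set r : ℝ := (Real.sqrt (star x ⬝ᵥ x).re)⁻¹
  have hr : 0 < r * r := mul_self_pos.2 (inv_ne_zero (Real.sqrt_pos.2 hs).ne')
  have hx_norm : star x ⬝ᵥ x = ((star x ⬝ᵥ x).re : ℂ) := Complex.ext rfl (by simp [him])
  refine ⟨(r : ℂ) • x, ?_, ?_⟩
  · rw [star_smul, smul_dotProduct, dotProduct_smul, hx_norm]
    simp only [smul_eq_mul, Complex.star_def, Complex.conj_ofReal, r]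
    norm_cast
    rw [← mul_assoc, ← mul_inv, Real.mul_self_sqrt hs.le, inv_mul_cancel₀ hs.ne']
  · rw [mulVec_smul, star_smul, smul_dotProduct, dotProduct_smul, smul_eq_mul, smul_eq_mul,
      Complex.star_def, Complex.conj_ofReal, ← mul_assoc, ← Complex.ofReal_mul,
      Complex.arg_real_mul _ hr]

theorem arg_mem_argNumericalRange_conjTranspose_mul_diagonal_mul [DecidableEq n]
    {Q : Matrix n n ℂ} (hQ : IsUnit Q) (d : n → ℂ) (k : n) :
    (d k).arg ∈ argNumericalRange (Qᴴ * diagonal d * Q) := by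
  obtain ⟨x, hx⟩ := mulVec_surjective_iff_isUnit.2 hQ (Pi.single k 1)
  have hx0 : x ≠ 0 := by
    rintro rfl
    simpa using congrFun hx k
  convert arg_mem_argNumericalRange _ hx0 using 2
  rw [star_dotProduct_conjTranspose_mul_diagonal_mul_mulVec, hx,
    Finset.sum_eq_single k (fun i _ hik => by simp [Pi.single_eq_of_ne hik]) (by simp)]
  simp

theorem exists_arg_sum_eq_of_mem_argNumericalRange [DecidableEq n] {Q : Matrix n n ℂ}
    (hQ : IsUnit Q) {d : n → ℂ} {θ : ℝ} (hθ : θ ∈ argNumericalRange (Qᴴ * diagonal d * Q)) :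
    ∃ c : n → ℝ, (∀ i, 0 ≤ c i) ∧ (∃ j, 0 < c j) ∧ θ = (∑ i, (c i : ℂ) * d i).arg := by
  obtain ⟨x, hx, rfl⟩ := hθ
  have hQx : Q *ᵥ x ≠ 0 := by
    intro h
    rw [← mulVec_zero Q] at h
    simp [mulVec_injective_of_isUnit hQ h] at hx
  obtain ⟨j, hj⟩ := Function.ne_iff.1 hQx
  exact ⟨fun i => Complex.normSq ((Q *ᵥ x) i), fun i => Complex.normSq_nonneg _,
    ⟨j, Complex.normSq_pos.2 hj⟩, by rw [star_dotProduct_conjTranspose_mul_diagonal_mul_mulVec]⟩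

end Matrix

/-- The largest and smallest phases of a sectorial matrix with numerical range in the
open upper half-plane are the maximum and minimum of `arg (x* A x)` over unit vectors. -/
theorem phase_max_min (n : ℕ) (hn : 0 < n)
    (A Q : Matrix (Fin n) (Fin n) ℂ) (φ : Fin n → ℝ)
    (hQ : IsUnit Q) (hφ : ∀ i, φ i ∈ Set.Ioo 0 Real.pi)
    (hA : A = Qᴴ * Matrix.diagonal (fun i => Complex.exp ((φ i : ℂ) * Complex.I)) * Q) :
    IsGreatest {θ : ℝ | ∃ x : Fin n → ℂ, star x ⬝ᵥ x = 1 ∧ θ = (star x ⬝ᵥ (A *ᵥ x)).arg}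
      (sSup (Set.range φ)) ∧
    IsLeast {θ : ℝ | ∃ x : Fin n → ℂ, star x ⬝ᵥ x = 1 ∧ θ = (star x ⬝ᵥ (A *ᵥ x)).arg}
      (sInf (Set.range φ)) := by
  have : Nonempty (Fin n) := ⟨⟨0, hn⟩⟩
  change IsGreatest (argNumericalRange A) (⨆ i, φ i) ∧ IsLeast (argNumericalRange A) (⨅ i, φ i)
  have hphase : ∀ k, φ k ∈ argNumericalRange A := fun k => by
    have hmem := hA ▸ arg_mem_argNumericalRange_conjTranspose_mul_diagonal_mul hQ _ k
    rwa [Complex.arg_exp_mul_I, (toIocMod_eq_self _).2 ⟨by linarith [(hφ k).1, Real.pi_pos],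
      by linarith [(hφ k).2]⟩] at hmem
  obtain ⟨kmax, hkmax⟩ := exists_eq_ciSup_of_finite (f := φ)
  obtain ⟨kmin, hkmin⟩ := exists_eq_ciInf_of_finite (f := φ)
  refine ⟨⟨hkmax ▸ hphase kmax, fun θ hθ => ?_⟩, ⟨hkmin ▸ hphase kmin, fun θ hθ => ?_⟩⟩ <;>
    obtain ⟨c, hc, hpos, rfl⟩ := exists_arg_sum_eq_of_mem_argNumericalRange hQ (hA ▸ hθ)
  · exact Complex.arg_sum_le hc hφ hpos fun i => le_ciSup (Set.finite_range φ).bddAbove i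
  · exact Complex.le_arg_sum hc hφ hpos fun i => ciInf_le (Set.finite_range φ).bddBelow i
end

section
/- Let A ∈ ℂ^{n×n} be sectorial with phases φ₁(A) ≥ … ≥ φₙ(A), and let Ã = U* A U be a compression with U ∈ ℂ^{n×k}, U*U = I. Then for each 1 ≤ i ≤ k, the phases interlace: φᵢ(A) ≥ φᵢ(Ã) ≥ φ_{i+n−k}(A). -/
open Matrix

lemma quad_conj {n k : ℕ} (M : Matrix (Fin n) (Fin n) ℂ) (U : Matrix (Fin n) (Fin k) ℂ)
    (u : Fin k → ℂ) :
    star u ⬝ᵥ ((Uᴴ * M * U) *ᵥ u) = star (U *ᵥ u) ⬝ᵥ (M *ᵥ (U *ᵥ u)) := by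
  rw [star_mulVec, ← Matrix.mulVec_mulVec, ← Matrix.mulVec_mulVec,
    Matrix.dotProduct_mulVec, Matrix.dotProduct_mulVec]

lemma quad_diag {n : ℕ} (f : Fin n → ℝ) (y : Fin n → ℂ) :
    star y ⬝ᵥ (Matrix.diagonal (fun j => Complex.exp ((f j : ℂ) * Complex.I)) *ᵥ y)
      = ∑ j, (Complex.normSq (y j) : ℂ) * Complex.exp ((f j : ℂ) * Complex.I) := by
  simp only [dotProduct, Matrix.mulVec_diagonal, Pi.star_apply, Complex.star_def]
  refine Finset.sum_congr rfl fun j _ => ?_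
  rw [Complex.normSq_eq_conj_mul_self]
  ring

lemma term_im (c r θ : ℝ) :
    (Complex.exp (-(θ:ℂ) * Complex.I) * ((c : ℂ) * Complex.exp ((r : ℂ) * Complex.I))).im
      = c * Real.sin (r - θ) := by
  rw [mul_comm, mul_assoc, ← Complex.exp_add]
  have : (r:ℂ) * Complex.I + -(θ:ℂ) * Complex.I = ((r - θ : ℝ) : ℂ) * Complex.I := by
    push_cast; ring
  rw [this, Complex.exp_mul_I]
  simp [Complex.mul_im]
  left
  rw [← Complex.ofReal_sub, Complex.cos_ofReal_im, Complex.sin_ofReal_re, zero_add]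

lemma im_neg {m : ℕ} (θ : ℝ) (c f : Fin m → ℝ)
    (hc0 : ∀ j, 0 ≤ c j)
    (hmem : ∀ j, c j ≠ 0 → -Real.pi < f j - θ ∧ f j - θ < 0)
    (hex : ∃ j, c j ≠ 0) :
    (Complex.exp (-(θ:ℂ) * Complex.I) * ∑ j, (c j : ℂ) * Complex.exp ((f j : ℂ) * Complex.I)).im < 0 := by
  rw [Finset.mul_sum, Complex.im_sum]
  have h : ∀ j, (Complex.exp (-(θ:ℂ) * Complex.I) * ((c j : ℂ) * Complex.exp ((f j : ℂ) * Complex.I))).im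
      = c j * Real.sin (f j - θ) := fun j => term_im _ _ _
  simp only [h]
  have : (0:ℝ) = ∑ _j : Fin m, (0:ℝ) := by simp
  rw [this]
  apply Finset.sum_lt_sum
  · intro j _
    by_cases hj : c j = 0
    · simp [hj]
    · obtain ⟨h1, h2⟩ := hmem j hj
      have := Real.sin_neg_of_neg_of_neg_pi_lt h2 h1
      nlinarith [lt_of_le_of_ne (hc0 j) (Ne.symm hj)]
  · obtain ⟨j, hj⟩ := hex
    refine ⟨j, Finset.mem_univ j, ?_⟩
    obtain ⟨h1, h2⟩ := hmem j hj
    have := Real.sin_neg_of_neg_of_neg_pi_lt h2 h1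
    nlinarith [lt_of_le_of_ne (hc0 j) (Ne.symm hj)]

lemma im_pos {m : ℕ} (θ : ℝ) (c f : Fin m → ℝ)
    (hc0 : ∀ j, 0 ≤ c j)
    (hmem : ∀ j, c j ≠ 0 → 0 < f j - θ ∧ f j - θ < Real.pi)
    (hex : ∃ j, c j ≠ 0) :
    0 < (Complex.exp (-(θ:ℂ) * Complex.I) * ∑ j, (c j : ℂ) * Complex.exp ((f j : ℂ) * Complex.I)).im := by
  rw [Finset.mul_sum, Complex.im_sum]
  have h : ∀ j, (Complex.exp (-(θ:ℂ) * Complex.I) * ((c j : ℂ) * Complex.exp ((f j : ℂ) * Complex.I))).im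
      = c j * Real.sin (f j - θ) := fun j => term_im _ _ _
  simp only [h]
  have : (0:ℝ) = ∑ _j : Fin m, (0:ℝ) := by simp
  rw [this]
  apply Finset.sum_lt_sum
  · intro j _
    by_cases hj : c j = 0
    · simp [hj]
    · obtain ⟨h1, h2⟩ := hmem j hj
      have := Real.sin_pos_of_pos_of_lt_pi h1 h2
      nlinarith [lt_of_le_of_ne (hc0 j) (Ne.symm hj)]
  · obtain ⟨j, hj⟩ := hex
    refine ⟨j, Finset.mem_univ j, ?_⟩
    obtain ⟨h1, h2⟩ := hmem j hj
    have := Real.sin_pos_of_pos_of_lt_pi h1 h2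
    nlinarith [lt_of_le_of_ne (hc0 j) (Ne.symm hj)]

lemma key {m l : ℕ} (α β t s : ℝ) (hαβ : β - α < Real.pi)
    (hαt : α < t) (htβ : t < β) (hαs : α < s) (hsβ : s < β)
    (c fc : Fin m → ℝ) (d fd : Fin l → ℝ)
    (hc0 : ∀ j, 0 ≤ c j) (hd0 : ∀ j, 0 ≤ d j)
    (hcmem : ∀ j, c j ≠ 0 → α < fc j ∧ fc j ≤ t)
    (hdmem : ∀ j, d j ≠ 0 → s ≤ fd j ∧ fd j < β)
    (hcex : ∃ j, c j ≠ 0) (hdex : ∃ j, d j ≠ 0)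
    (heq : ∑ j, (c j : ℂ) * Complex.exp ((fc j : ℂ) * Complex.I)
         = ∑ j, (d j : ℂ) * Complex.exp ((fd j : ℂ) * Complex.I)) :
    s ≤ t := by
  by_contra h
  push_neg at h
  set θ := (t + s) / 2 with hθ
  have h1 : (Complex.exp (-(θ:ℂ) * Complex.I) * ∑ j, (c j : ℂ) * Complex.exp ((fc j : ℂ) * Complex.I)).im < 0 := by
    apply im_neg θ c fc hc0 _ hcex
    intro j hj
    obtain ⟨ha, hb⟩ := hcmem j hj
    constructor <;> [nlinarith; nlinarith]
  have h2 : 0 < (Complex.exp (-(θ:ℂ) * Complex.I) * ∑ j, (d j : ℂ) * Complex.exp ((fd j : ℂ) * Complex.I)).im := by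
    apply im_pos θ d fd hd0 _ hdex
    intro j hj
    obtain ⟨ha, hb⟩ := hdmem j hj
    constructor <;> [nlinarith; nlinarith]
  rw [heq] at h1
  linarith

lemma exists_ker {k : ℕ} {ι : Type} [Fintype ι] (hcard : Fintype.card ι < k)
    (L : (Fin k → ℂ) →ₗ[ℂ] (ι → ℂ)) : ∃ u : Fin k → ℂ, u ≠ 0 ∧ L u = 0 := by
  have hni : ¬ Function.Injective L := by
    intro h
    have := LinearMap.finrank_le_finrank_of_injective h
    rw [Module.finrank_fintype_fun_eq_card, Module.finrank_fintype_fun_eq_card,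
      Fintype.card_fin] at this
    omega
  rw [Function.not_injective_iff] at hni
  obtain ⟨a, b, hab, hne⟩ := hni
  exact ⟨a - b, sub_ne_zero.mpr hne, by rw [map_sub, hab, sub_self]⟩

lemma mulVec_inj {a b : ℕ} (M : Matrix (Fin a) (Fin b) ℂ) (N : Matrix (Fin b) (Fin a) ℂ)
    (h : N * M = 1) (u : Fin b → ℂ) (hu : M *ᵥ u = 0) : u = 0 := by
  have : N *ᵥ (M *ᵥ u) = u := by rw [Matrix.mulVec_mulVec, h, Matrix.one_mulVec]
  rw [hu, Matrix.mulVec_zero] at this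
  exact this.symm

/-- Interlacing of phases under compression: if `A` is sectorial with decreasingly
ordered phases `φ` (all in a common interval of length `< π`), and the compression
`Uᴴ A U` has decreasingly ordered phases `ψ` in the same interval, then
`φ i ≥ ψ i ≥ φ (i + n - k)`. -/
theorem phases_interlacing (n k : ℕ) (hk : k ≤ n) (α β : ℝ) (hαβ : β - α < Real.pi)
    (A Q : Matrix (Fin n) (Fin n) ℂ) (φ : Fin n → ℝ)
    (U : Matrix (Fin n) (Fin k) ℂ) (P : Matrix (Fin k) (Fin k) ℂ) (ψ : Fin k → ℝ)
    (hA0 : (0 : ℂ) ∉ numRange A)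
    (hQ : IsUnit Q)
    (hAdec : A = Qᴴ * Matrix.diagonal (fun i => Complex.exp ((φ i : ℂ) * Complex.I)) * Q)
    (hφmono : Antitone φ) (hφmem : ∀ i, φ i ∈ Set.Ioo α β)
    (hU : Uᴴ * U = 1)
    (hP : IsUnit P)
    (hcomp : Uᴴ * A * U =
      Pᴴ * Matrix.diagonal (fun i => Complex.exp ((ψ i : ℂ) * Complex.I)) * P)
    (hψmono : Antitone ψ) (hψmem : ∀ i, ψ i ∈ Set.Ioo α β) :
    ∀ i : Fin k, ψ i ≤ φ (Fin.castLE hk i) ∧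
      φ ⟨i.val + n - k, by have := i.isLt; omega⟩ ≤ ψ i := by
  obtain ⟨Qi, hQi⟩ := hQ.exists_left_inv
  obtain ⟨Pinv, hPinv⟩ := hP.exists_left_inv
  intro i
  have hcard : Fintype.card {j : Fin k // j ≠ i} < k := by
    have h1 : Fintype.card {j : Fin k // ¬ (j = i)} = k - Fintype.card {j : Fin k // j = i} := by
      rw [Fintype.card_subtype_compl, Fintype.card_fin]
    rw [Fintype.card_subtype_eq] at h1
    have hk0 : 0 < k := i.pos
    calc Fintype.card {j : Fin k // j ≠ i} = k - 1 := h1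
    _ < k := by omega
  -- general fact, for a given u with nonzero parts:
  have main : ∀ u : Fin k → ℂ, u ≠ 0 →
      (∃ m, Complex.normSq ((Q *ᵥ (U *ᵥ u)) m) ≠ 0) ∧
      (∃ j, Complex.normSq ((P *ᵥ u) j) ≠ 0) ∧
      ∑ j, (Complex.normSq ((Q *ᵥ (U *ᵥ u)) j) : ℂ) * Complex.exp ((φ j : ℂ) * Complex.I)
        = ∑ j, (Complex.normSq ((P *ᵥ u) j) : ℂ) * Complex.exp ((ψ j : ℂ) * Complex.I) := by
    intro u hu0
    have hx0 : U *ᵥ u ≠ 0 := fun h => hu0 (mulVec_inj U Uᴴ hU u h)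
    have hy0 : Q *ᵥ (U *ᵥ u) ≠ 0 := fun h => hx0 (mulVec_inj Q Qi hQi _ h)
    have hz0 : P *ᵥ u ≠ 0 := fun h => hu0 (mulVec_inj P Pinv hPinv u h)
    refine ⟨?_, ?_, ?_⟩
    · obtain ⟨m, hm⟩ := Function.ne_iff.mp hy0
      exact ⟨m, fun h => hm (by simpa using Complex.normSq_eq_zero.mp h)⟩
    · obtain ⟨m, hm⟩ := Function.ne_iff.mp hz0
      exact ⟨m, fun h => hm (by simpa using Complex.normSq_eq_zero.mp h)⟩
    · have e1 : star u ⬝ᵥ ((Uᴴ * A * U) *ᵥ u)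
          = ∑ j, (Complex.normSq ((Q *ᵥ (U *ᵥ u)) j) : ℂ) * Complex.exp ((φ j : ℂ) * Complex.I) :=
        calc star u ⬝ᵥ ((Uᴴ * A * U) *ᵥ u)
            = star (U *ᵥ u) ⬝ᵥ (A *ᵥ (U *ᵥ u)) := quad_conj A U u
          _ = star (Q *ᵥ (U *ᵥ u)) ⬝ᵥ
              (Matrix.diagonal (fun j => Complex.exp ((φ j : ℂ) * Complex.I)) *ᵥ (Q *ᵥ (U *ᵥ u))) := by
            rw [hAdec]; exact quad_conj _ Q _
          _ = _ := quad_diag φ _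
      have e2 : star u ⬝ᵥ ((Uᴴ * A * U) *ᵥ u)
          = ∑ j, (Complex.normSq ((P *ᵥ u) j) : ℂ) * Complex.exp ((ψ j : ℂ) * Complex.I) := by
        rw [hcomp, quad_conj, quad_diag]
      rw [← e1, e2]
  constructor
  · -- ψ i ≤ φ (castLE i)
    set L1 : (Fin k → ℂ) →ₗ[ℂ] ({j : Fin k // j ≠ i} → ℂ) :=
      { toFun := fun u j => if (j.1 : ℕ) < (i : ℕ)
          then (Q *ᵥ (U *ᵥ u)) (Fin.castLE hk j.1) else (P *ᵥ u) j.1,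
        map_add' := by
          intro u v; funext j
          simp only [Matrix.mulVec_add, Pi.add_apply]
          split_ifs with h <;> simp [Fin.lt_def, h]
        map_smul' := by
          intro a u; funext j
          simp only [Matrix.mulVec_smul, Pi.smul_apply, RingHom.id_apply]
          split_ifs with h <;> simp [Fin.lt_def, h] } with hL1
    obtain ⟨u, hu0, hLu⟩ := exists_ker hcard L1
    obtain ⟨⟨m0, hm0⟩, ⟨j0, hj0⟩, heq⟩ := main u hu0
    have hPz : ∀ j : Fin k, (i : ℕ) < (j : ℕ) → (P *ᵥ u) j = 0 := by
      intro j hj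
      have hne : j ≠ i := Fin.ne_of_val_ne (by omega)
      have h2 := congrFun hLu ⟨j, hne⟩
      simp only [hL1, LinearMap.coe_mk, AddHom.coe_mk, Pi.zero_apply] at h2
      split at h2
      · omega
      · exact h2
    have hQy : ∀ m : Fin n, (m : ℕ) < (i : ℕ) → (Q *ᵥ (U *ᵥ u)) m = 0 := by
      intro m hm
      have hmk : (m : ℕ) < k := lt_trans hm i.isLt
      have hne : (⟨(m : ℕ), hmk⟩ : Fin k) ≠ i := Fin.ne_of_val_ne (Nat.ne_of_lt hm)
      have h2 := congrFun hLu ⟨⟨(m : ℕ), hmk⟩, hne⟩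
      simp only [hL1, LinearMap.coe_mk, AddHom.coe_mk, Pi.zero_apply] at h2
      split at h2
      · rwa [show Fin.castLE hk (⟨(m : ℕ), hmk⟩ : Fin k) = m from Fin.ext rfl] at h2
      · exact absurd hm (by exact_mod_cast ‹_›)
    refine key α β (φ (Fin.castLE hk i)) (ψ i) hαβ
      (hφmem _).1 (hφmem _).2 (hψmem _).1 (hψmem _).2
      (fun m => Complex.normSq ((Q *ᵥ (U *ᵥ u)) m)) φ
      (fun j => Complex.normSq ((P *ᵥ u) j)) ψ
      (fun _ => Complex.normSq_nonneg _) (fun _ => Complex.normSq_nonneg _)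
      ?_ ?_ ⟨m0, hm0⟩ ⟨j0, hj0⟩ heq
    · intro m hm
      refine ⟨(hφmem m).1, hφmono ?_⟩
      rw [Fin.le_def]
      simp only [Fin.coe_castLE]
      by_contra hlt
      exact hm (by simp [hQy m (by omega)])
    · intro j hj
      refine ⟨hψmono ?_, (hψmem j).2⟩
      rw [Fin.le_def]
      by_contra hlt
      exact hj (by simp [hPz j (by omega)])
  · -- φ ⟨i + n - k⟩ ≤ ψ i
    set L2 : (Fin k → ℂ) →ₗ[ℂ] ({j : Fin k // j ≠ i} → ℂ) :=
      { toFun := fun u j => if (j.1 : ℕ) < (i : ℕ)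
          then (P *ᵥ u) j.1
          else (Q *ᵥ (U *ᵥ u)) ⟨(j.1 : ℕ) + n - k, by have := j.1.isLt; omega⟩,
        map_add' := by
          intro u v; funext j
          simp only [Matrix.mulVec_add, Pi.add_apply]
          split_ifs with h <;> simp [Fin.lt_def, h]
        map_smul' := by
          intro a u; funext j
          simp only [Matrix.mulVec_smul, Pi.smul_apply, RingHom.id_apply]
          split_ifs with h <;> simp [Fin.lt_def, h] } with hL2
    obtain ⟨u, hu0, hLu⟩ := exists_ker hcard L2
    obtain ⟨⟨m0, hm0⟩, ⟨j0, hj0⟩, heq⟩ := main u hu0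
    have hPz : ∀ j : Fin k, (j : ℕ) < (i : ℕ) → (P *ᵥ u) j = 0 := by
      intro j hj
      have hne : j ≠ i := Fin.ne_of_val_ne (by omega)
      have h2 := congrFun hLu ⟨j, hne⟩
      simp only [hL2, LinearMap.coe_mk, AddHom.coe_mk, Pi.zero_apply] at h2
      split at h2
      · exact h2
      · omega
    have hQy : ∀ m : Fin n, (i : ℕ) + n - k < (m : ℕ) → (Q *ᵥ (U *ᵥ u)) m = 0 := by
      intro m hm
      have hik : (i : ℕ) < k := i.isLt
      have hmn : (m : ℕ) < n := m.isLt
      have hjk : (m : ℕ) + k - n < k := by omega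
      have hne : (⟨(m : ℕ) + k - n, hjk⟩ : Fin k) ≠ i :=
        Fin.ne_of_val_ne (show (m : ℕ) + k - n ≠ (i : ℕ) by omega)
      have h2 := congrFun hLu ⟨⟨(m : ℕ) + k - n, hjk⟩, hne⟩
      simp only [hL2, LinearMap.coe_mk, AddHom.coe_mk, Pi.zero_apply] at h2
      split at h2
      · exact absurd (show (m : ℕ) + k - n < (i : ℕ) by exact_mod_cast ‹_›) (by omega)
      · rwa [show (⟨((⟨(m : ℕ) + k - n, hjk⟩ : Fin k) : ℕ) + n - k, by omega⟩ : Fin n) = m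
          from Fin.ext (by simp; omega)] at h2
    refine key α β (ψ i) (φ ⟨(i : ℕ) + n - k, by have := i.isLt; omega⟩) hαβ
      (hψmem _).1 (hψmem _).2 (hφmem _).1 (hφmem _).2
      (fun j => Complex.normSq ((P *ᵥ u) j)) ψ
      (fun m => Complex.normSq ((Q *ᵥ (U *ᵥ u)) m)) φ
      (fun _ => Complex.normSq_nonneg _) (fun _ => Complex.normSq_nonneg _)
      ?_ ?_ ⟨j0, hj0⟩ ⟨m0, hm0⟩ heq.symm
    · intro j hj
      refine ⟨(hψmem j).1, hψmono ?_⟩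
      rw [Fin.le_def]
      by_contra hlt
      exact hj (by simp [hPz j (by omega)])
    · intro m hm
      refine ⟨hφmono ?_, (hφmem m).2⟩
      rw [Fin.le_def]
      simp only []
      by_contra hlt
      exact hm (by simp [hQy m (by omega)])
end

section
/- Let A, B ∈ ℂ^{n×n} with B sectorial and A B⁻¹ diagonalizable. For any k eigenvalues λ_{i₁},…,λ_{i_k} of A B⁻¹, there exists an isometry U ∈ ℂ^{n×k} (U*U = I) such that ∏_{m=1}^k λ_{i_m} = det(U* A U) / det(U* B U). -/
/-!
The columns `w_m = B⁻¹ p_{s m}` (with `p_j` the eigenvector columns of `P`) are linearly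
independent and satisfy the generalized eigenrelation `A W = B W D`, `D = diag (dd ∘ s)`.
Factor `W = U T` with `U` an isometry and `T` invertible (a thin QR factorization). Then
`(Uᴴ A U) T = Uᴴ B U T D`, so `det (Uᴴ A U) = det (Uᴴ B U) · ∏ dd (s m)`, and
`det (Uᴴ B U) ≠ 0` because the numerical range of `Uᴴ B U` lies in that of `B`, which avoids `0`.
-/

open Matrix

section NumericalRange

variable {n : ℕ}

lemma exists_smul_star_dotProduct_self_eq_one {x : Fin n → ℂ} (hx : x ≠ 0) :
    ∃ c : ℂ, star (c • x) ⬝ᵥ (c • x) = 1 := by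
  set v : EuclideanSpace ℂ (Fin n) := WithLp.toLp 2 x
  have hv : ‖v‖ ≠ 0 := by simpa [v] using hx
  have h : inner ℂ ((‖v‖⁻¹ : ℂ) • v) ((‖v‖⁻¹ : ℂ) • v) = 1 := by
    rw [inner_self_eq_norm_sq_to_K, norm_smul, norm_inv, Complex.norm_real, norm_norm,
      inv_mul_cancel₀ hv]
    norm_num
  exact ⟨(‖v‖⁻¹ : ℂ), by
    rwa [dotProduct_comm, ← EuclideanSpace.inner_toLp_toLp, WithLp.toLp_smul]⟩

lemma zero_mem_numRange_of_mulVec_eq_zero {B : Matrix (Fin n) (Fin n) ℂ} {x : Fin n → ℂ}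
    (hx : x ≠ 0) (hBx : B *ᵥ x = 0) : (0 : ℂ) ∈ numRange B := by
  obtain ⟨c, hc⟩ := exists_smul_star_dotProduct_self_eq_one hx
  exact ⟨c • x, hc, by rw [mulVec_smul, hBx, smul_zero, dotProduct_zero]⟩

lemma det_ne_zero_of_zero_notMem_numRange {B : Matrix (Fin n) (Fin n) ℂ}
    (hB : (0 : ℂ) ∉ numRange B) : B.det ≠ 0 := by
  intro hdet
  obtain ⟨x, hx, hBx⟩ := exists_mulVec_eq_zero_iff.mpr hdet
  exact hB (zero_mem_numRange_of_mulVec_eq_zero hx hBx)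

lemma numRange_conjTranspose_mul_mul_subset {k : ℕ} (B : Matrix (Fin n) (Fin n) ℂ)
    {U : Matrix (Fin n) (Fin k) ℂ} (hU : Uᴴ * U = 1) :
    numRange (Uᴴ * B * U) ⊆ numRange B := by
  rintro z ⟨x, hx, rfl⟩
  refine ⟨U *ᵥ x, ?_, ?_⟩
  · rw [star_mulVec, dotProduct_mulVec, vecMul_vecMul, hU, vecMul_one, hx]
  · rw [star_mulVec, dotProduct_mulVec, dotProduct_mulVec, vecMul_vecMul,
      dotProduct_mulVec, vecMul_vecMul, Matrix.mul_assoc]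

end NumericalRange

section ThinQR

variable {𝕜 : Type*} [RCLike 𝕜] {m k : Type*} [Fintype m] [Fintype k] [DecidableEq k]

lemma exists_isometry_mul_conjTranspose_mul_eq (W : Matrix m k 𝕜)
    (hW : LinearIndependent 𝕜 W.col) :
    ∃ U : Matrix m k 𝕜, Uᴴ * U = 1 ∧ U * (Uᴴ * W) = W := by
  let w : k → EuclideanSpace 𝕜 m := fun q => WithLp.toLp 2 (W.col q)
  have hw : LinearIndependent 𝕜 w :=
    hW.map' (WithLp.linearEquiv 2 𝕜 (m → 𝕜)).symm.toLinearMap (LinearEquiv.ker _)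
  let S := Submodule.span 𝕜 (Set.range w)
  have hS : Fintype.card (Fin (Module.finrank 𝕜 S)) = Fintype.card k := by
    rw [Fintype.card_fin, finrank_span_eq_card hw]
  let b : OrthonormalBasis k 𝕜 S :=
    (stdOrthonormalBasis 𝕜 S).reindex (Fintype.equivOfCardEq hS)
  let U : Matrix m k 𝕜 := Matrix.of fun i j => (b j : EuclideanSpace 𝕜 m) i
  have hUX : ∀ (X : Matrix m k 𝕜) j q,
      (Uᴴ * X) j q = inner 𝕜 (b j : EuclideanSpace 𝕜 m) (WithLp.toLp 2 (X.col q)) := by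
    intro X j q
    simp only [U, mul_apply, conjTranspose_apply, of_apply,
      EuclideanSpace.inner_eq_star_dotProduct, dotProduct, mul_comm]
    rfl
  refine ⟨U, ?_, ?_⟩
  · ext j j'
    rw [one_apply, hUX, ← b.inner_eq_ite, Submodule.coe_inner]
    rfl
  · ext i q
    have hwq := congrArg (fun x : S => (x : EuclideanSpace 𝕜 m) i)
      (b.sum_repr' ⟨w q, Submodule.subset_span ⟨q, rfl⟩⟩)
    simp only [Submodule.coe_sum, Submodule.coe_smul, WithLp.ofLp_sum, WithLp.ofLp_smul,
      Finset.sum_apply, Pi.smul_apply, smul_eq_mul, Submodule.coe_inner] at hwq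
    rw [mul_apply, show W i q = (w q).ofLp i from rfl, ← hwq]
    exact Finset.sum_congr rfl fun j _ => by rw [hUX, mul_comm]; rfl

lemma exists_thinQR (W : Matrix m k 𝕜) (hW : LinearIndependent 𝕜 W.col) :
    ∃ (U : Matrix m k 𝕜) (T : Matrix k k 𝕜), Uᴴ * U = 1 ∧ IsUnit T ∧ U * T = W := by
  obtain ⟨U, hU, hUW⟩ := exists_isometry_mul_conjTranspose_mul_eq W hW
  refine ⟨U, Uᴴ * W, hU, ?_, hUW⟩
  rw [← mulVec_injective_iff_isUnit]
  intro x y hxy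
  apply mulVec_injective_iff.mpr hW
  simpa only [mulVec_mulVec, hUW] using congrArg (U *ᵥ ·) hxy

end ThinQR

lemma submatrix_mul_diagonal {R : Type*} [Semiring R] {m n k : Type*} [Fintype n] [Fintype k]
    [DecidableEq n] [DecidableEq k] (P : Matrix m n R) (d : n → R) (s : k → n) :
    (P * diagonal d).submatrix id s = P.submatrix id s * diagonal (d ∘ s) := by
  ext i j
  simp [mul_diagonal]

lemma det_mul_mul_eq_of_mul_eq {R : Type*} [CommRing R] {n k : Type*} [Fintype n] [Fintype k]
    [DecidableEq k] {A B : Matrix n n R} {Y : Matrix k n R} {U : Matrix n k R}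
    {T D : Matrix k k R} (hT : IsUnit T) (hAB : A * (U * T) = B * (U * T) * D) :
    (Y * A * U).det = (Y * B * U).det * D.det := by
  have hTdet : IsUnit T.det := (isUnit_iff_isUnit_det T).mp hT
  refine hTdet.mul_left_injective ?_
  calc (Y * A * U).det * T.det = (Y * (A * (U * T))).det := by
        rw [← det_mul]; simp only [Matrix.mul_assoc]
    _ = (Y * (B * (U * T) * D)).det := by rw [hAB]
    _ = (Y * B * U).det * D.det * T.det := by
        simp only [← Matrix.mul_assoc, det_mul]; ring

/-- Compound spectral containment: if `B` is sectorial and `A B⁻¹` is diagonalizable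
with eigenvalues `dd`, then the product of any `k` eigenvalues of `A B⁻¹` equals
`det(Uᴴ A U)/det(Uᴴ B U)` for some isometry `U : ℂⁿ→ᵏ`. -/
theorem compound_spectrum_containment (n k : ℕ)
    (A B : Matrix (Fin n) (Fin n) ℂ) (hB : (0 : ℂ) ∉ numRange B)
    (P : Matrix (Fin n) (Fin n) ℂ) (dd : Fin n → ℂ) (hP : IsUnit P)
    (hdiag : A * B⁻¹ = P * Matrix.diagonal dd * P⁻¹)
    (s : Fin k → Fin n) (hs : Function.Injective s) :
    ∃ U : Matrix (Fin n) (Fin k) ℂ, Uᴴ * U = 1 ∧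
      (∏ m : Fin k, dd (s m)) = (Uᴴ * A * U).det / (Uᴴ * B * U).det := by
  have hBdet : IsUnit B.det := (det_ne_zero_of_zero_notMem_numRange hB).isUnit
  have hAP : A * B⁻¹ * P = P * diagonal dd := by
    rw [hdiag, Matrix.mul_assoc, nonsing_inv_mul _ ((isUnit_iff_isUnit_det P).mp hP),
      Matrix.mul_one]
  set W := B⁻¹ * P.submatrix id s
  have hW : LinearIndependent ℂ W.col :=
    (linearIndependent_cols_of_isUnit
      ((isUnit_nonsing_inv_iff.mpr ((isUnit_iff_isUnit_det B).mpr hBdet)).mul hP)).comp s hs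
  have hAW : A * W = B * W * diagonal (dd ∘ s) := by
    rw [mul_nonsing_inv_cancel_left _ _ hBdet, ← submatrix_mul_diagonal, ← hAP,
      Matrix.mul_assoc]
    rfl
  obtain ⟨U, T, hU, hT, hUT⟩ := exists_thinQR W hW
  have hUBU : (Uᴴ * B * U).det ≠ 0 := det_ne_zero_of_zero_notMem_numRange
    fun h => hB (numRange_conjTranspose_mul_mul_subset B hU h)
  refine ⟨U, hU, ?_⟩
  rw [det_mul_mul_eq_of_mul_eq hT (hUT ▸ hAW), det_diagonal, mul_div_cancel_left₀ _ hUBU]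
  rfl
end

section
/- Let A, B ∈ ℂ^{n×n} be sectorial matrices whose numerical ranges both lie in the sector { re^{iθ} : r > 0, |θ| < π/2 } (i.e., Re(x*Ax) > 0 and Re(x*Bx) > 0 for all nonzero x). Then every eigenvalue λ of AB satisfies λ ∉ (−∞, 0]; equivalently, AB has no eigenvalue with argument π. -/
open Matrix

/-- If `A` and `B` are accretive (`Re (x* A x) > 0` and `Re (x* B x) > 0` for all
nonzero `x`), then `A B` has no eigenvalue on the closed negative real axis. -/
theorem accretive_product_no_nonpositive_eigenvalue (n : ℕ)
    (A B : Matrix (Fin n) (Fin n) ℂ)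
    (hA : ∀ x : Fin n → ℂ, x ≠ 0 → 0 < (star x ⬝ᵥ (A *ᵥ x)).re)
    (hB : ∀ x : Fin n → ℂ, x ≠ 0 → 0 < (star x ⬝ᵥ (B *ᵥ x)).re) :
    ∀ (lam : ℂ) (v : Fin n → ℂ), v ≠ 0 → (A * B) *ᵥ v = lam • v →
      ¬ (lam.im = 0 ∧ lam.re ≤ 0) := by
  intro lam v hv heig ⟨him, hre⟩
  set w := B *ᵥ v with hw
  have hAw : A *ᵥ w = lam • v := by
    rw [hw, mulVec_mulVec] at *; exact heig
  have hwne : w ≠ 0 := by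
    intro h
    have := hB v hv
    rw [← hw, h] at this
    simp at this
  -- key computation
  have hkey : (star w ⬝ᵥ (A *ᵥ w)) = lam * star (star v ⬝ᵥ (B *ᵥ v)) := by
    rw [hAw, dotProduct_smul, ← hw, star_dotProduct]
    simp [smul_eq_mul]
  have h1 := hA w hwne
  have h2 := hB v hv
  rw [hkey] at h1
  have : (lam * star (star v ⬝ᵥ (B *ᵥ v))).re =
      lam.re * (star v ⬝ᵥ (B *ᵥ v)).re := by
    simp [Complex.mul_re, him]
  rw [this] at h1
  nlinarith
end

section
/- Let A ∈ ℂ^{n×n} be sectorial with numerical range in the sector { re^{iθ} : r > 0, |θ| ≤ φ̄ } where φ̄ < π/2, and let α satisfy 0 ≤ α < π − φ̄. Then for every B ∈ ℂ^{n×n} with W(B) ⊆ { re^{iθ} : r > 0, |θ| ≤ α }, the matrix I + AB is invertible. -/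
open Matrix

/-- The closed sector `{ r e^{iθ} : r > 0, α ≤ θ ≤ β }`. -/
def sector (α β : ℝ) : Set ℂ :=
  {z | ∃ r θ : ℝ, 0 < r ∧ α ≤ θ ∧ θ ≤ β ∧ z = (r : ℂ) * Complex.exp ((θ : ℂ) * Complex.I)}

/-!
If `(1 + A B) x = 0` with `x ≠ 0`, put `y = B x ≠ 0`, so `A y = -x`. Then
`⟨y, A y⟩ = -conj ⟨x, B x⟩`, hence `⟨y, A y⟩ ⟨x, B x⟩ = -|⟨x, B x⟩|²` is a non-positive real.
But the two quadratic form values lie in the sectors of half-angles `φ̄` and `α`, so their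
product lies in the sector of half-angle `φ̄ + α < π`, which contains no non-positive real.
-/

open Complex ComplexOrder

lemma zero_notMem_sector (a b : ℝ) : (0 : ℂ) ∉ sector a b := by
  rintro ⟨r, θ, hr, -, -, h⟩
  exact mul_ne_zero (ofReal_ne_zero.2 hr.ne') (exp_ne_zero _) h.symm

lemma ofReal_mul_mem_sector {a b c : ℝ} {z : ℂ} (hc : 0 < c) (hz : z ∈ sector a b) :
    (c : ℂ) * z ∈ sector a b := by
  obtain ⟨r, θ, hr, ha, hb, rfl⟩ := hz
  exact ⟨c * r, θ, mul_pos hc hr, ha, hb, by push_cast; ring⟩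

lemma mul_mem_sector {a b c d : ℝ} {z w : ℂ} (hz : z ∈ sector a b) (hw : w ∈ sector c d) :
    z * w ∈ sector (a + c) (b + d) := by
  obtain ⟨r, θ, hr, ha, hb, rfl⟩ := hz
  obtain ⟨s, φ, hs, hc, hd, rfl⟩ := hw
  refine ⟨r * s, θ + φ, mul_pos hr hs, by linarith, by linarith, ?_⟩
  push_cast
  rw [add_mul, exp_add]
  ring

lemma arg_mem_Icc_of_mem_sector {a b : ℝ} {z : ℂ} (ha : -Real.pi < a) (hb : b ≤ Real.pi)
    (hz : z ∈ sector a b) : arg z ∈ Set.Icc a b := by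
  obtain ⟨r, θ, hr, haθ, hθb, rfl⟩ := hz
  rw [arg_real_mul _ hr, exp_mul_I, arg_cos_add_sin_mul_I ⟨by linarith, by linarith⟩]
  exact ⟨haθ, hθb⟩

lemma neg_ofReal_notMem_sector {β r : ℝ} (hβ : β < Real.pi) (hr : 0 ≤ r) :
    -(r : ℂ) ∉ sector (-β) β := by
  intro h
  rcases hr.eq_or_lt with rfl | hr
  · exact zero_notMem_sector _ _ (by simpa using h)
  · have harg := (arg_mem_Icc_of_mem_sector (by linarith) hβ.le h).2
    rw [← ofReal_neg, arg_ofReal_of_neg (neg_neg_of_pos hr)] at harg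
    linarith

lemma star_dotProduct_mulVec_mem_sector {n : ℕ} {A : Matrix (Fin n) (Fin n) ℂ} {a b : ℝ}
    (hA : numRange A ⊆ sector a b) {x : Fin n → ℂ} (hx : x ≠ 0) :
    star x ⬝ᵥ (A *ᵥ x) ∈ sector a b := by
  obtain ⟨R, hR, hxx⟩ : ∃ R : ℝ, 0 < R ∧ star x ⬝ᵥ x = R := by
    have hpos := pos_iff.1 (dotProduct_star_self_pos_iff.2 hx)
    refine ⟨_, hpos.1, ?_⟩
    rw [← re_add_im (star x ⬝ᵥ x), ← hpos.2]
    simp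
  set s : ℝ := (Real.sqrt R)⁻¹
  have hs : (s : ℂ) * s * R = 1 := by
    rw [← ofReal_mul, ← ofReal_mul, ← mul_inv, Real.mul_self_sqrt hR.le,
      inv_mul_cancel₀ hR.ne', ofReal_one]
  have hstar : star (s • x) = s • star x := by rw [star_smul, star_trivial]
  have hunit : (s : ℂ) * s * (star x ⬝ᵥ (A *ᵥ x)) ∈ numRange A := by
    refine ⟨s • x, ?_, ?_⟩
    · simp only [hstar, smul_dotProduct, dotProduct_smul, hxx, Complex.real_smul]
      linear_combination hs
    · simp only [hstar, mulVec_smul, smul_dotProduct, dotProduct_smul, Complex.real_smul]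
      ring
  convert ofReal_mul_mem_sector hR (hA hunit) using 1
  linear_combination (-(star x ⬝ᵥ (A *ᵥ x))) * hs

theorem one_add_mul_isUnit_general (n : ℕ) (phiBar α : ℝ)
    (hα : α < Real.pi - phiBar)
    (A : Matrix (Fin n) (Fin n) ℂ) (hA : numRange A ⊆ sector (-phiBar) phiBar) :
    ∀ B : Matrix (Fin n) (Fin n) ℂ, numRange B ⊆ sector (-α) α →
      IsUnit (1 + A * B) := by
  intro B hB
  rw [isUnit_iff_isUnit_det, isUnit_iff_ne_zero]
  intro hdet
  obtain ⟨x, hx, hker⟩ := exists_mulVec_eq_zero_iff.2 hdet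
  have hABx : A *ᵥ (B *ᵥ x) = -x := by
    rw [add_mulVec, one_mulVec, ← mulVec_mulVec] at hker
    exact eq_neg_of_add_eq_zero_right hker
  have hBx : B *ᵥ x ≠ 0 := fun h => hx (by simpa [h] using hABx)
  have hprod := mul_mem_sector (star_dotProduct_mulVec_mem_sector hA hBx)
    (star_dotProduct_mulVec_mem_sector hB hx)
  rw [← neg_add, hABx, dotProduct_neg, star_dotProduct, neg_mul, star_def,
    ← normSq_eq_conj_mul_self] at hprod
  exact neg_ofReal_notMem_sector (by linarith) (normSq_nonneg _) hprod

/-- Rank robustness (case `k = 1`): if `W(A)` lies in the sector of half-angle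
`φ̄ < π/2` and `0 ≤ α < π - φ̄`, then `I + A B` is invertible for every `B` with
`W(B)` in the sector of half-angle `α`. -/
theorem one_add_mul_isUnit (n : ℕ) (phiBar α : ℝ)
    (hphi : phiBar < Real.pi / 2) (hα0 : 0 ≤ α) (hα : α < Real.pi - phiBar)
    (A : Matrix (Fin n) (Fin n) ℂ) (hA : numRange A ⊆ sector (-phiBar) phiBar) :
    ∀ B : Matrix (Fin n) (Fin n) ℂ, numRange B ⊆ sector (-α) α →
      IsUnit (1 + A * B) :=
  one_add_mul_isUnit_general n phiBar α hα A hA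
end
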